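/- arXiv:1901.03481 — 7 statements merged into one kernel-verified Lean document; each statement's English description precedes it below -/
import Mathlib

section
/- Let α ∈ (0,1) and let ψ be the one-sided stable probability distribution of exponent α, i.e., the probability measure on [0,∞) whose characteristic function is φ(ξ) = exp(−|ξ|^α (1 − i·tan(πα/2)·sgn(ξ))). Let θ : ℕ → (0,∞) satisfy θ_n / n^{1/α} → 0 as n → ∞. Then for every integer k ≥ 2 and every real t > 0, lim_{n→∞} f(k, n, t·θ_n) = 1. -/
open MeasureTheory Real Filter Topology

/-- `j`-fold convolution power of a measure on ℝ, with `convPow ψ 0 = δ₀`. -/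
noncomputable def convPow (ψ : Measure ℝ) : ℕ → Measure ℝ
  | 0 => Measure.dirac 0
  | (j + 1) => ((convPow ψ j).prod ψ).map (fun p => p.1 + p.2)

/-- `f(k, n, s) = Σ_{j=0}^∞ (1 − k/n)^j ∫_{[0,s]} ψ((s−u, ∞)) ψ^{*j}(du)`. -/
noncomputable def pauseF (ψ : Measure ℝ) (k n : ℕ) (s : ℝ) : ℝ :=
  ∑' j : ℕ, (1 - (k : ℝ) / n) ^ j *
    ∫ u in Set.Icc (0 : ℝ) s, (ψ (Set.Ioi (s - u))).toReal ∂(convPow ψ j)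

/-- characteristic function `φ(ξ) = ∫ e^{iξx} ψ(dx)`. -/
noncomputable def charFn (ψ : Measure ℝ) (ξ : ℝ) : ℂ :=
  ∫ x, Complex.exp (Complex.I * ξ * x) ∂ψ

/-! The summands telescope: with `F_j(s) = ψ^{*j}([0, s])`, the `j`-th integral is
`F_j(s) - F_{j+1}(s)`, so `f(k, n, s) ≤ 1` and, for every `N`,
`f(k, n, s) ≥ (1 - k/n)^N (1 - F_N(s)) ≥ 1 - Nk/n - F_N(s)`.
Smoothing the indicator of an interval of length `s` by a Fejér-type kernel gives
`μ([a, a + s]) ≤ (5s/4) ∫_0^{2/s} |φ_μ|`, and `|φ|^N = exp(-N|ξ|^α)` then yields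
`F_N(s) ≤ C s N^{-1/α}`. Taking `N ≈ cn` with `c > 0` fixed, `s = tθ_n = o(n^{1/α})` makes
`F_N(s) → 0`, so `liminf f ≥ 1 - ck` for every `c > 0`. -/

open Set

lemma convPow_succ (ψ : Measure ℝ) (j : ℕ) : convPow ψ (j + 1) = convPow ψ j ∗ ψ := rfl

instance isProbabilityMeasure_convPow (ψ : Measure ℝ) [IsProbabilityMeasure ψ] :
    ∀ j, IsProbabilityMeasure (convPow ψ j)
  | 0 => by rw [convPow]; infer_instance
  | j + 1 => by
    have := isProbabilityMeasure_convPow ψ j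
    rw [convPow_succ, Measure.conv]
    exact Measure.isProbabilityMeasure_map (by fun_prop)

lemma charFun_convPow (ψ : Measure ℝ) [IsProbabilityMeasure ψ] (ξ : ℝ) :
    ∀ j, charFun (convPow ψ j) ξ = charFun ψ ξ ^ j
  | 0 => by simp [convPow]
  | j + 1 => by rw [convPow_succ, charFun_conv, charFun_convPow ψ ξ j, pow_succ]

lemma charFn_eq_charFun (μ : Measure ℝ) : charFn μ = charFun μ := by
  ext ξ
  simp only [charFn, charFun_apply_real, mul_comm Complex.I, mul_right_comm _ Complex.I]

lemma norm_charFun_eq_exp_neg_abs_rpow {α : ℝ} {ψ : Measure ℝ}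
    (hchar : ∀ ξ : ℝ, charFn ψ ξ =
      Complex.exp (-(|ξ| ^ α : ℝ) * (1 - Complex.I * (Real.tan (π * α / 2) * Real.sign ξ))))
    (ξ : ℝ) : ‖charFun ψ ξ‖ = Real.exp (-|ξ| ^ α) := by
  rw [← charFn_eq_charFun, hchar, Complex.norm_exp]
  simp [-Complex.ofReal_tan]

lemma conv_Iio_zero {ν ψ : Measure ℝ} [SFinite ν] [SFinite ψ] (hν : ν (Iio 0) = 0)
    (hψ : ψ (Iio 0) = 0) : (ν ∗ ψ) (Iio 0) = 0 := by
  rw [Measure.conv, Measure.map_apply (by fun_prop) measurableSet_Iio]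
  refine measure_mono_null (t := Iio 0 ×ˢ univ ∪ univ ×ˢ Iio 0) (fun p hp => ?_)
    (measure_union_null (by rw [Measure.prod_prod, hν, zero_mul])
      (by rw [Measure.prod_prod, hψ, mul_zero]))
  by_contra h
  simp only [mem_union, mem_prod, mem_Iio, mem_univ, and_true, true_and, not_or, not_lt] at h
  exact (not_lt.2 (add_nonneg h.1 h.2)) hp

lemma convPow_Iio_eq_zero {ψ : Measure ℝ} [IsProbabilityMeasure ψ] (hψ : ψ (Iio 0) = 0) :
    ∀ j, convPow ψ j (Iio 0) = 0
  | 0 => by simp [convPow]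
  | j + 1 => by rw [convPow_succ]; exact conv_Iio_zero (convPow_Iio_eq_zero hψ j) hψ

lemma Icc_ae_eq_Iic {ν : Measure ℝ} (hν : ν (Iio 0) = 0) (s : ℝ) : Icc 0 s =ᵐ[ν] Iic s := by
  have hIci : Ici (0 : ℝ) =ᵐ[ν] univ := ae_eq_univ.2 (by rwa [compl_Ici])
  simpa [Ici_inter_Iic] using hIci.inter (ae_eq_refl (Iic s))

lemma conv_Iic_eq_lintegral (ν ψ : Measure ℝ) [SFinite ψ] (s : ℝ) :
    (ν ∗ ψ) (Iic s) = ∫⁻ u, ψ (Iic (s - u)) ∂ν := by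
  rw [Measure.conv, Measure.map_apply (by fun_prop) measurableSet_Iic,
    Measure.prod_apply (measurableSet_Iic.preimage (by fun_prop))]
  congr with u
  congr with y
  simp only [mem_preimage, mem_Iic]
  constructor <;> intro h <;> linarith

lemma measurable_measure_Ioi_sub (ψ : Measure ℝ) (s : ℝ) :
    Measurable fun u => ψ (Ioi (s - u)) :=
  Monotone.measurable fun _ _ huv => measure_mono (Ioi_subset_Ioi (by linarith))

lemma lintegral_Icc_measure_Ioi_sub_add_conv (ν ψ : Measure ℝ) [IsProbabilityMeasure ψ]
    (hν : ν (Iio 0) = 0) (hψ : ψ (Iio 0) = 0) (s : ℝ) :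
    ∫⁻ u in Icc 0 s, ψ (Ioi (s - u)) ∂ν + (ν ∗ ψ) (Iic s) = ν (Iic s) := by
  have hsupport : Function.support (fun u => ψ (Iic (s - u))) ⊆ Iic s := by
    intro u hu
    by_contra hsu
    rw [mem_Iic, not_le] at hsu
    exact hu (measure_mono_null (Iic_subset_Iio.2 (by linarith)) hψ)
  rw [conv_Iic_eq_lintegral, ← setLIntegral_eq_of_support_subset hsupport,
    ← Measure.restrict_congr_set (Icc_ae_eq_Iic hν s),
    ← lintegral_add_left (measurable_measure_Ioi_sub ψ s), ← measure_congr (Icc_ae_eq_Iic hν s)]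
  have hsum : ∀ x, ψ (Ioi x) + ψ (Iic x) = 1 := fun x => by
    rw [← compl_Iic, add_comm, measure_add_measure_compl measurableSet_Iic, measure_univ]
  simp [hsum]

lemma setIntegral_measure_Ioi_sub (ν ψ : Measure ℝ) [IsFiniteMeasure ν]
    [IsProbabilityMeasure ψ] (hν : ν (Iio 0) = 0) (hψ : ψ (Iio 0) = 0) (s : ℝ) :
    ∫ u in Icc 0 s, (ψ (Ioi (s - u))).toReal ∂ν = ν.real (Iic s) - (ν ∗ ψ).real (Iic s) := by
  have hadd := lintegral_Icc_measure_Ioi_sub_add_conv ν ψ hν hψ s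
  have hfin : ∫⁻ u in Icc 0 s, ψ (Ioi (s - u)) ∂ν ≠ ⊤ :=
    (ENNReal.add_ne_top.1 (hadd ▸ measure_ne_top ν (Iic s))).1
  rw [integral_toReal (measurable_measure_Ioi_sub ψ s).aemeasurable
      (ae_of_all _ fun _ => measure_lt_top ψ _), eq_sub_iff_add_eq, measureReal_def,
    measureReal_def, ← ENNReal.toReal_add hfin (measure_ne_top _ _), hadd]

lemma antitone_convPow_real_Iic {ψ : Measure ℝ} [IsProbabilityMeasure ψ] (hψ : ψ (Iio 0) = 0)
    (s : ℝ) : Antitone fun j => (convPow ψ j).real (Iic s) :=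
  antitone_nat_of_succ_le fun j => by
    rw [convPow_succ, ← sub_nonneg,
      ← setIntegral_measure_Ioi_sub _ _ (convPow_Iio_eq_zero hψ j) hψ]
    exact integral_nonneg fun _ => ENNReal.toReal_nonneg

section Telescoping

variable {G : ℕ → ℝ} {r : ℝ}

lemma summable_sub_succ_of_antitone (hG : Antitone G) (hG0 : ∀ j, 0 ≤ G j) :
    Summable fun j => G j - G (j + 1) :=
  summable_of_sum_range_le (fun j => sub_nonneg.2 (hG j.le_succ)) fun N => by
    rw [Finset.sum_range_sub']
    linarith [hG0 N]

lemma summable_pow_mul_sub_succ (hG : Antitone G) (hG0 : ∀ j, 0 ≤ G j) (hr0 : 0 ≤ r)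
    (hr1 : r ≤ 1) : Summable fun j => r ^ j * (G j - G (j + 1)) :=
  (summable_sub_succ_of_antitone hG hG0).of_nonneg_of_le
    (fun j => mul_nonneg (pow_nonneg hr0 j) (sub_nonneg.2 (hG j.le_succ)))
    (fun j => mul_le_of_le_one_left (sub_nonneg.2 (hG j.le_succ)) (pow_le_one₀ hr0 hr1))

lemma tsum_pow_mul_sub_succ_le (hG : Antitone G) (hG0 : ∀ j, 0 ≤ G j) (hr0 : 0 ≤ r)
    (hr1 : r ≤ 1) : ∑' j, r ^ j * (G j - G (j + 1)) ≤ G 0 := by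
  refine (summable_pow_mul_sub_succ hG hG0 hr0 hr1).tsum_le_of_sum_range_le fun N => ?_
  calc ∑ j ∈ Finset.range N, r ^ j * (G j - G (j + 1))
      ≤ ∑ j ∈ Finset.range N, (G j - G (j + 1)) := Finset.sum_le_sum fun j _ =>
        mul_le_of_le_one_left (sub_nonneg.2 (hG j.le_succ)) (pow_le_one₀ hr0 hr1)
    _ ≤ G 0 := by rw [Finset.sum_range_sub']; linarith [hG0 N]

lemma pow_mul_sub_le_tsum_pow_mul_sub_succ (hG : Antitone G) (hG0 : ∀ j, 0 ≤ G j) (hr0 : 0 ≤ r)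
    (hr1 : r ≤ 1) (N : ℕ) : r ^ N * (G 0 - G N) ≤ ∑' j, r ^ j * (G j - G (j + 1)) := by
  calc r ^ N * (G 0 - G N) = ∑ j ∈ Finset.range N, r ^ N * (G j - G (j + 1)) := by
        rw [← Finset.mul_sum, Finset.sum_range_sub']
    _ ≤ ∑ j ∈ Finset.range N, r ^ j * (G j - G (j + 1)) :=
        Finset.sum_le_sum fun j hj => mul_le_mul_of_nonneg_right
          (pow_le_pow_of_le_one hr0 hr1 (Finset.mem_range.1 hj).le) (sub_nonneg.2 (hG j.le_succ))
    _ ≤ ∑' j, r ^ j * (G j - G (j + 1)) :=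
        (summable_pow_mul_sub_succ hG hG0 hr0 hr1).sum_le_tsum _ fun j _ =>
          mul_nonneg (pow_nonneg hr0 j) (sub_nonneg.2 (hG j.le_succ))

end Telescoping

section PauseF

variable {ψ : Measure ℝ} [IsProbabilityMeasure ψ] {k n : ℕ}

lemma pauseF_eq_tsum (hψ : ψ (Iio 0) = 0) (s : ℝ) :
    pauseF ψ k n s = ∑' j, (1 - (k : ℝ) / n) ^ j *
      ((convPow ψ j).real (Iic s) - (convPow ψ (j + 1)).real (Iic s)) := by
  simp only [pauseF, setIntegral_measure_Ioi_sub _ _ (convPow_Iio_eq_zero hψ _) hψ]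
  rfl

lemma one_sub_div_mem_Icc (hkn : k ≤ n) : 1 - (k : ℝ) / n ∈ Icc 0 1 :=
  ⟨sub_nonneg.2 (div_le_one_of_le₀ (Nat.cast_le.2 hkn) n.cast_nonneg),
    sub_le_self _ (by positivity)⟩

lemma pauseF_le_one (hψ : ψ (Iio 0) = 0) (hkn : k ≤ n) (s : ℝ) : pauseF ψ k n s ≤ 1 := by
  rw [pauseF_eq_tsum hψ]
  exact (tsum_pow_mul_sub_succ_le (antitone_convPow_real_Iic hψ s)
    (fun _ => measureReal_nonneg) (one_sub_div_mem_Icc hkn).1 (one_sub_div_mem_Icc hkn).2).trans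
    measureReal_le_one

lemma one_sub_sub_measureReal_convPow_le_pauseF (hψ : ψ (Iio 0) = 0) (hkn : k ≤ n) {s : ℝ}
    (hs : 0 ≤ s) (N : ℕ) :
    1 - N * k / n - (convPow ψ N).real (Iic s) ≤ pauseF ψ k n s := by
  obtain ⟨hr0, hr1⟩ := one_sub_div_mem_Icc hkn
  have hG0 : (convPow ψ 0).real (Iic s) = 1 := by
    simp [convPow, measureReal_def, Measure.dirac_apply_of_mem (mem_Iic.2 hs)]
  have hbernoulli : 1 - N * k / n ≤ (1 - (k : ℝ) / n) ^ N := by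
    have := one_add_mul_le_pow (a := -((k : ℝ) / n)) (by linarith) N
    rw [← sub_eq_add_neg] at this
    linarith [show (N : ℝ) * k / n = N * (k / n) by ring]
  have hlower := pow_mul_sub_le_tsum_pow_mul_sub_succ (antitone_convPow_real_Iic hψ s)
    (fun _ => measureReal_nonneg) hr0 hr1 N
  rw [hG0, ← pauseF_eq_tsum hψ] at hlower
  nlinarith [pow_le_one₀ hr0 hr1 (n := N), measureReal_nonneg (μ := convPow ψ N) (s := Iic s)]

end PauseF

section FejerKernel

variable {T : ℝ}

lemma setIntegral_one_sub_div_mul_cos (hT : 0 < T) {u : ℝ} (hu : u ≠ 0) :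
    ∫ ξ in Ioc 0 T, (1 - ξ / T) * cos (ξ * u) = (1 - cos (T * u)) / (T * u ^ 2) := by
  rw [← intervalIntegral.integral_of_le hT.le]
  have hderiv : ∀ ξ ∈ uIcc 0 T,
      HasDerivAt (fun ξ => (1 - ξ / T) * (sin (ξ * u) / u) - cos (ξ * u) / (T * u ^ 2))
        ((1 - ξ / T) * cos (ξ * u)) ξ := by
    intro ξ _
    have hlin : HasDerivAt (fun ξ => 1 - ξ / T) (-(1 / T)) ξ := by
      simpa using ((hasDerivAt_id ξ).div_const T).const_sub 1
    have hsin := (hasDerivAt_sin (ξ * u)).comp ξ (hasDerivAt_mul_const u)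
    have hcos := (hasDerivAt_cos (ξ * u)).comp ξ (hasDerivAt_mul_const u)
    refine ((hlin.mul (hsin.div_const u)).sub (hcos.div_const (T * u ^ 2))).congr_deriv ?_
    simp only [Function.comp_apply]
    field_simp
    ring
  rw [intervalIntegral.integral_eq_sub_of_hasDerivAt hderiv
    ((by fun_prop : Continuous _).intervalIntegrable _ _)]
  field_simp
  simp only [sub_self, mul_zero, zero_mul, zero_sub, sub_zero, sin_zero, cos_zero, sub_neg_eq_add]
  ring

lemma setIntegral_one_sub_div_mul_cos_zero (hT : 0 < T) :
    ∫ ξ in Ioc 0 T, (1 - ξ / T) * cos (ξ * 0) = T / 2 := by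
  rw [← intervalIntegral.integral_of_le hT.le]
  simp only [mul_zero, cos_zero, mul_one]
  rw [intervalIntegral.integral_sub intervalIntegrable_const
    ((by fun_prop : Continuous _).intervalIntegrable _ _),
    intervalIntegral.integral_div, integral_id]
  simp only [intervalIntegral.integral_const, sub_zero, smul_eq_mul, mul_one]
  field_simp
  ring

lemma setIntegral_one_sub_div_mul_cos_nonneg (hT : 0 < T) (u : ℝ) :
    0 ≤ ∫ ξ in Ioc 0 T, (1 - ξ / T) * cos (ξ * u) := by
  rcases eq_or_ne u 0 with rfl | hu
  · rw [setIntegral_one_sub_div_mul_cos_zero hT]; positivity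
  · rw [setIntegral_one_sub_div_mul_cos hT hu]
    exact div_nonneg (by linarith [cos_le_one (T * u)]) (by positivity)

lemma two_fifths_mul_sq_le_one_sub_cos {x : ℝ} (hx : |x| ≤ 1) : 2 / 5 * x ^ 2 ≤ 1 - cos x := by
  have hquartic : |x| ^ 4 ≤ x ^ 2 := by
    have hsq : |x| ^ 2 ≤ 1 := pow_le_one₀ (abs_nonneg x) hx
    calc |x| ^ 4 = |x| ^ 2 * |x| ^ 2 := by ring
      _ ≤ |x| ^ 2 := mul_le_of_le_one_right (sq_nonneg _) hsq
      _ = x ^ 2 := sq_abs x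
  linarith [(abs_le.1 (cos_bound hx)).2, sq_nonneg x]

lemma two_fifths_mul_le_setIntegral_one_sub_div_mul_cos (hT : 0 < T) {u : ℝ}
    (hu : |T * u| ≤ 1) : 2 / 5 * T ≤ ∫ ξ in Ioc 0 T, (1 - ξ / T) * cos (ξ * u) := by
  rcases eq_or_ne u 0 with rfl | hu0
  · rw [setIntegral_one_sub_div_mul_cos_zero hT]; linarith
  · rw [setIntegral_one_sub_div_mul_cos hT hu0, le_div_iff₀ (by positivity)]
    nlinarith [two_fifths_mul_sq_le_one_sub_cos hu]

end FejerKernel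

lemma integral_cos_mul_sub_le_norm_charFun (μ : Measure ℝ) [IsFiniteMeasure μ] (ξ c : ℝ) :
    ∫ x, cos (ξ * (x - c)) ∂μ ≤ ‖charFun μ ξ‖ := by
  have hint : Integrable (fun x : ℝ => Complex.exp (↑(ξ * (x - c)) * Complex.I)) μ :=
    (integrable_const (1 : ℝ)).mono' (by fun_prop)
      (ae_of_all _ fun x => (Complex.norm_exp_ofReal_mul_I _).le)
  calc ∫ x, cos (ξ * (x - c)) ∂μ
      = (∫ x, Complex.exp (↑(ξ * (x - c)) * Complex.I) ∂μ).re := by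
        rw [← RCLike.re_eq_complex_re, ← integral_re hint]
        simp only [RCLike.re_eq_complex_re, Complex.exp_ofReal_mul_I_re]
    _ = (Complex.exp (-(↑(ξ * c) * Complex.I)) * charFun μ ξ).re := by
        rw [charFun_apply_real, ← integral_const_mul]
        congr 2 with x
        rw [← Complex.exp_add]
        push_cast
        ring_nf
    _ ≤ ‖charFun μ ξ‖ := by
        refine (Complex.re_le_norm _).trans_eq ?_
        rw [norm_mul, ← neg_mul, ← Complex.ofReal_neg, Complex.norm_exp_ofReal_mul_I, one_mul]

lemma measureReal_Icc_le_integral_norm_charFun (μ : Measure ℝ) [IsFiniteMeasure μ] {a b : ℝ}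
    (hab : a < b) :
    μ.real (Icc a b) ≤ 5 * (b - a) / 4 * ∫ ξ in Ioc 0 (2 / (b - a)), ‖charFun μ ξ‖ := by
  set T := 2 / (b - a)
  set c := (a + b) / 2
  have hT : 0 < T := div_pos two_pos (sub_pos.2 hab)
  set F : ℝ → ℝ → ℝ := fun x ξ => (1 - ξ / T) * cos (ξ * (x - c))
  have hweight : ∀ ξ ∈ Ioc 0 T, 0 ≤ 1 - ξ / T ∧ 1 - ξ / T ≤ 1 := fun ξ hξ =>
    ⟨sub_nonneg.2 ((div_le_one hT).2 hξ.2), sub_le_self _ (div_pos hξ.1 hT).le⟩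
  have hF : Integrable (Function.uncurry F) (μ.prod (volume.restrict (Ioc 0 T))) := by
    refine Integrable.mono' (((by fun_prop : Continuous fun ξ : ℝ => |1 - ξ / T|)
      |>.integrableOn_Ioc).comp_snd μ) (by fun_prop) (ae_of_all _ fun q => ?_)
    simpa [F, Function.uncurry, abs_mul] using
      mul_le_of_le_one_right (abs_nonneg _) (abs_cos_le_one _)
  have hlower : 2 / 5 * T * μ.real (Icc a b) ≤ ∫ x, (∫ ξ in Ioc 0 T, F x ξ) ∂μ := by
    calc 2 / 5 * T * μ.real (Icc a b) = ∫ x in Icc a b, 2 / 5 * T ∂μ := by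
          rw [setIntegral_const, smul_eq_mul, mul_comm]
      _ ≤ ∫ x in Icc a b, (∫ ξ in Ioc 0 T, F x ξ) ∂μ := by
          refine setIntegral_mono_on (integrable_const _).integrableOn
            hF.integral_prod_left.integrableOn measurableSet_Icc fun x hx => ?_
          refine two_fifths_mul_le_setIntegral_one_sub_div_mul_cos hT ?_
          rw [abs_mul, abs_of_pos hT, ← le_div_iff₀' hT, abs_le]
          constructor <;> simp only [T, c, one_div_div] <;> linarith [hx.1, hx.2]
      _ ≤ ∫ x, (∫ ξ in Ioc 0 T, F x ξ) ∂μ :=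
          setIntegral_le_integral hF.integral_prod_left
            (ae_of_all _ fun x => setIntegral_one_sub_div_mul_cos_nonneg hT _)
  have hupper : ∫ ξ in Ioc 0 T, ∫ x, F x ξ ∂μ ≤ ∫ ξ in Ioc 0 T, ‖charFun μ ξ‖ := by
    refine setIntegral_mono_on hF.integral_prod_right
      continuous_charFun.norm.integrableOn_Ioc measurableSet_Ioc fun ξ hξ => ?_
    rw [integral_const_mul]
    calc (1 - ξ / T) * ∫ x, cos (ξ * (x - c)) ∂μ ≤ (1 - ξ / T) * ‖charFun μ ξ‖ :=
          mul_le_mul_of_nonneg_left (integral_cos_mul_sub_le_norm_charFun μ ξ c) (hweight ξ hξ).1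
      _ ≤ ‖charFun μ ξ‖ := mul_le_of_le_one_left (norm_nonneg _) (hweight ξ hξ).2
  calc μ.real (Icc a b) = 5 * (b - a) / 4 * (2 / 5 * T * μ.real (Icc a b)) := by
        have hTba : T * (b - a) = 2 := div_mul_cancel₀ 2 (sub_pos.2 hab).ne'
        linear_combination (-μ.real (Icc a b) / 2) * hTba
    _ ≤ 5 * (b - a) / 4 * ∫ ξ in Ioc 0 T, ‖charFun μ ξ‖ := by
        gcongr
        exact hlower.trans ((integral_integral_swap hF).le.trans hupper)

section Stable

variable {α : ℝ} {ψ : Measure ℝ} [IsProbabilityMeasure ψ]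

lemma integrableOn_exp_neg_mul_rpow {p b : ℝ} (hp : 0 < p) (hb : 0 < b) :
    IntegrableOn (fun x : ℝ => exp (-b * x ^ p)) (Ioi 0) :=
  (integrableOn_rpow_mul_exp_neg_mul_rpow neg_one_lt_zero hp hb).congr_fun
    (fun x _ => by simp) measurableSet_Ioi

lemma measureReal_convPow_Iic_le (hα : 0 < α) (hψ : ψ (Iio 0) = 0)
    (hnorm : ∀ ξ, ‖charFun ψ ξ‖ = exp (-|ξ| ^ α)) {M : ℕ} (hM : 0 < M) {s : ℝ} (hs : 0 < s) :
    (convPow ψ M).real (Iic s) ≤ 5 / 4 * Gamma (1 / α + 1) * s / M ^ (1 / α) := by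
  have hM' : (0 : ℝ) < M := Nat.cast_pos.2 hM
  have hnormM : ∀ ξ ∈ Ioc 0 (2 / s), ‖charFun (convPow ψ M) ξ‖ = exp (-M * ξ ^ α) := by
    intro ξ hξ
    rw [charFun_convPow, norm_pow, hnorm, abs_of_pos hξ.1,
      ← exp_nat_mul, mul_neg, neg_mul]
  calc (convPow ψ M).real (Iic s) = (convPow ψ M).real (Icc 0 s) :=
        measureReal_congr (Icc_ae_eq_Iic (convPow_Iio_eq_zero hψ M) s).symm
    _ ≤ 5 * (s - 0) / 4 * ∫ ξ in Ioc 0 (2 / (s - 0)), ‖charFun (convPow ψ M) ξ‖ :=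
        measureReal_Icc_le_integral_norm_charFun _ (by linarith)
    _ = 5 * s / 4 * ∫ ξ in Ioc 0 (2 / s), exp (-M * ξ ^ α) := by
        rw [sub_zero, setIntegral_congr_fun measurableSet_Ioc hnormM]
    _ ≤ 5 * s / 4 * ∫ ξ in Ioi 0, exp (-M * ξ ^ α) := by
        refine mul_le_mul_of_nonneg_left ?_ (by positivity)
        exact setIntegral_mono_set (integrableOn_exp_neg_mul_rpow hα hM')
          (ae_of_all _ fun _ => (exp_pos _).le) Ioc_subset_Ioi_self.eventuallyLE
    _ = 5 / 4 * Gamma (1 / α + 1) * s / M ^ (1 / α) := by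
        rw [integral_exp_neg_mul_rpow hα hM', neg_div, rpow_neg hM'.le]
        ring

lemma one_sub_sub_le_pauseF_of_norm_charFun (hα : 0 < α) (hψ : ψ (Iio 0) = 0)
    (hnorm : ∀ ξ, ‖charFun ψ ξ‖ = exp (-|ξ| ^ α)) {k n : ℕ} (hkn : k ≤ n) (hn : 0 < n)
    {c : ℝ} (hc : 0 < c) {s : ℝ} (hs : 0 < s) :
    1 - (c * k + k / n) - 5 / 4 * Gamma (1 / α + 1) / c ^ (1 / α) * (s / n ^ (1 / α))
      ≤ pauseF ψ k n s := by
  have hn' : (0 : ℝ) < n := Nat.cast_pos.2 hn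
  set N := ⌈c * n⌉₊
  have hcn : 0 < c * n := mul_pos hc hn'
  have hN : 0 < N := Nat.ceil_pos.2 hcn
  have hNk : N * k / n ≤ c * k + k / n := by
    have hNle : (N : ℝ) ≤ c * n + 1 := (Nat.ceil_lt_add_one hcn.le).le
    calc (N : ℝ) * k / n ≤ (c * n + 1) * k / n := by gcongr
      _ = c * k + k / n := by field_simp
  have hG : (convPow ψ N).real (Iic s)
      ≤ 5 / 4 * Gamma (1 / α + 1) / c ^ (1 / α) * (s / n ^ (1 / α)) := by
    refine (measureReal_convPow_Iic_le hα hψ hnorm hN hs).trans ?_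
    calc 5 / 4 * Gamma (1 / α + 1) * s / N ^ (1 / α)
        ≤ 5 / 4 * Gamma (1 / α + 1) * s / (c * n) ^ (1 / α) := by
          have := Gamma_pos_of_pos (by positivity : 0 < 1 / α + 1)
          gcongr
          exact Nat.le_ceil _
      _ = 5 / 4 * Gamma (1 / α + 1) / c ^ (1 / α) * (s / n ^ (1 / α)) := by
          rw [mul_rpow hc.le hn'.le]
          ring
  linarith [one_sub_sub_measureReal_convPow_le_pauseF hψ hkn hs.le N]

end Stable

theorem stable_pauseF_limit_sub_scaling_general
    (α : ℝ) (hα : α ∈ Set.Ioo (0 : ℝ) 1)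
    (ψ : Measure ℝ) [IsProbabilityMeasure ψ]
    (hsupp : ψ (Set.Iio 0) = 0)
    (hchar : ∀ ξ : ℝ, charFn ψ ξ =
      Complex.exp (-(|ξ| ^ α : ℝ) * (1 - Complex.I * (Real.tan (π * α / 2) * Real.sign ξ))))
    (θ : ℕ → ℝ) (hθ : ∀ n, 0 < θ n)
    (hscale : Tendsto (fun n : ℕ => θ n / (n : ℝ) ^ (1 / α)) atTop (𝓝 0))
    (k : ℕ) (t : ℝ) (ht : 0 < t) :
    Tendsto (fun n : ℕ => pauseF ψ k n (t * θ n)) atTop (𝓝 1) := by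
  refine tendsto_order.2 ⟨fun a ha => ?_, fun a ha => ?_⟩
  · obtain ⟨c, hc, hkc⟩ := exists_pos_mul_lt (sub_pos.2 ha) k
    set C := 5 / 4 * Gamma (1 / α + 1) / c ^ (1 / α)
    have hlower : Tendsto (fun n : ℕ => 1 - (c * k + k / n) - C * (t * (θ n / n ^ (1 / α))))
        atTop (𝓝 (1 - (c * k + 0) - C * (t * 0))) :=
      ((tendsto_const_nhds.add (tendsto_const_div_atTop_nhds_zero_nat _)).const_sub 1).sub
        ((hscale.const_mul t).const_mul C)
    have ha' : a < 1 - (c * k + 0) - C * (t * 0) := by linarith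
    filter_upwards [hlower.eventually (lt_mem_nhds ha'), eventually_ge_atTop (max k 1)]
      with n hn hkn
    refine hn.trans_le ?_
    rw [← mul_div_assoc]
    exact one_sub_sub_le_pauseF_of_norm_charFun hα.1 hsupp
      (norm_charFun_eq_exp_neg_abs_rpow hchar) (le_of_max_le_left hkn)
      (le_of_max_le_right hkn) hc (mul_pos ht (hθ n))
  · filter_upwards [eventually_ge_atTop k] with n hkn
    exact (pauseF_le_one hsupp hkn _).trans_lt ha

/-- for the one-sided α-stable pausing time, if `θ_n / n^{1/α} → 0`, then
`f(k, n, t θ_n) → 1` for every integer `k ≥ 2` and `t > 0`. -/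
theorem stable_pauseF_limit_sub_scaling
    (α : ℝ) (hα : α ∈ Set.Ioo (0 : ℝ) 1)
    (ψ : Measure ℝ) [IsProbabilityMeasure ψ]
    (hsupp : ψ (Set.Iio 0) = 0)
    (hchar : ∀ ξ : ℝ, charFn ψ ξ =
      Complex.exp (-(|ξ| ^ α : ℝ) * (1 - Complex.I * (Real.tan (π * α / 2) * Real.sign ξ))))
    (θ : ℕ → ℝ) (hθ : ∀ n, 0 < θ n)
    (hscale : Tendsto (fun n : ℕ => θ n / (n : ℝ) ^ (1 / α)) atTop (𝓝 0))
    (k : ℕ) (hk : 2 ≤ k) (t : ℝ) (ht : 0 < t) :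
    Tendsto (fun n : ℕ => pauseF ψ k n (t * θ n)) atTop (𝓝 1) :=
  stable_pauseF_limit_sub_scaling_general α hα ψ hsupp hchar θ hθ hscale k t ht
end

section
/- Let α ∈ (0,1) with α ≠ 1/2, and let k ≥ 2 be a fixed integer. Then for every b > 0, lim_{n→∞} (1/n) ∫_b^∞ e^{−x cos(πα)/cos(πα/2)} / | 1 − 2(1 − k/n) e^{−x cos(πα)/cos(πα/2)} cos(2x sin(πα/2)) + (1 − k/n)² e^{−2x cos(πα)/cos(πα/2)} | dx = 0. -/
open MeasureTheory Real Filter Topology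

private lemma den_abs_bound (c E θ : ℝ) (hc : 0 ≤ c) (hE : 0 ≤ E) :
    (1 - c * E) ^ 2 ≤ |1 - 2 * c * E * Real.cos θ + c ^ 2 * E ^ 2| := by
  have h1 : Real.cos θ ≤ 1 := Real.cos_le_one θ
  have h2 : (1 - c * E) ^ 2 ≤ 1 - 2 * c * E * Real.cos θ + c ^ 2 * E ^ 2 := by
    nlinarith [mul_nonneg hc hE]
  exact h2.trans (le_abs_self _)

private lemma tendsto_div_helper (I : ℕ → ℝ) (C : ℝ)
    (h0 : ∀ n, 0 ≤ I n) (hC : ∀ᶠ n : ℕ in atTop, I n ≤ C) :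
    Tendsto (fun n : ℕ => (1 / (n : ℝ)) * I n) atTop (𝓝 0) := by
  have hh : Tendsto (fun n : ℕ => (1 / (n : ℝ)) * C) atTop (𝓝 0) := by
    simpa using (tendsto_const_div_atTop_nhds_zero_nat 1).mul_const C
  refine tendsto_of_tendsto_of_tendsto_of_le_of_le' tendsto_const_nhds hh ?_ ?_
  · filter_upwards with n
    have : (0 : ℝ) ≤ 1 / (n : ℝ) := by positivity
    exact mul_nonneg this (h0 n)
  · filter_upwards [hC] with n hn
    exact mul_le_mul_of_nonneg_left hn (by positivity)

/-- Lemma 3.2: for `α ∈ (0,1)`, `α ≠ 1/2`, and fixed `k ≥ 2`, the tail integral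
divided by `n` tends to `0`. -/
theorem stable_tail_integral_limit
    (α : ℝ) (hα : α ∈ Set.Ioo (0 : ℝ) 1) (hα2 : α ≠ 1 / 2)
    (k : ℕ) (hk : 2 ≤ k) (b : ℝ) (hb : 0 < b) :
    Tendsto
      (fun n : ℕ =>
        (1 / (n : ℝ)) *
          ∫ x in Set.Ioi b,
            Real.exp (-x * Real.cos (π * α) / Real.cos (π * α / 2)) /
              |1 - 2 * (1 - (k : ℝ) / n) *
                    Real.exp (-x * Real.cos (π * α) / Real.cos (π * α / 2)) *
                    Real.cos (2 * x * Real.sin (π * α / 2)) +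
                  (1 - (k : ℝ) / n) ^ 2 *
                    Real.exp (-2 * x * Real.cos (π * α) / Real.cos (π * α / 2))|)
      atTop (𝓝 0) := by
  obtain ⟨hα0, hα1⟩ := hα
  have hπ := Real.pi_pos
  have hB : 0 < Real.cos (π * α / 2) := by
    apply Real.cos_pos_of_mem_Ioo
    constructor <;> nlinarith
  set β : ℝ := Real.cos (π * α) / Real.cos (π * α / 2) with hβ
  have hnum : ∀ x : ℝ, -x * Real.cos (π * α) / Real.cos (π * α / 2) = -(β * x) := by
    intro x; rw [hβ]; ring
  have hnum2 : ∀ x : ℝ, Real.exp (-2 * x * Real.cos (π * α) / Real.cos (π * α / 2))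
      = Real.exp (-(β * x)) ^ 2 := by
    intro x
    rw [sq, ← Real.exp_add]
    congr 1
    rw [hβ]; ring
  -- the sequence `c n = 1 - k/n` tends to 1
  have hctend : Tendsto (fun n : ℕ => 1 - (k : ℝ) / n) atTop (𝓝 1) := by
    have := (tendsto_const_div_atTop_nhds_zero_nat (k : ℝ)).const_sub 1
    simpa using this
  -- obtain a uniform exponential bound, eventually in n
  obtain ⟨K, m, hm, hev⟩ :
      ∃ K m : ℝ, 0 < m ∧ ∀ᶠ n : ℕ in atTop, ∀ x ∈ Set.Ioi b,
        Real.exp (-x * Real.cos (π * α) / Real.cos (π * α / 2)) /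
          |1 - 2 * (1 - (k : ℝ) / n) *
                Real.exp (-x * Real.cos (π * α) / Real.cos (π * α / 2)) *
                Real.cos (2 * x * Real.sin (π * α / 2)) +
              (1 - (k : ℝ) / n) ^ 2 *
                Real.exp (-2 * x * Real.cos (π * α) / Real.cos (π * α / 2))|
          ≤ K * Real.exp (-(m * x)) := by
    rcases hα2.lt_or_gt with hhalf | hhalf
    · -- α < 1/2 : β > 0
      have hcosA : 0 < Real.cos (π * α) := by
        apply Real.cos_pos_of_mem_Ioo
        constructor <;> nlinarith
      have hβpos : 0 < β := div_pos hcosA hB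
      set t : ℝ := Real.exp (-(β * b)) with ht
      have ht1 : t < 1 := by
        rw [ht]
        apply Real.exp_lt_one_iff.2
        nlinarith
      refine ⟨((1 - t) ^ 2)⁻¹, β, hβpos, ?_⟩
      rw [eventually_atTop]
      refine ⟨k, fun n hn x hx => ?_⟩
      have hx' : b < x := hx
      set c : ℝ := 1 - (k : ℝ) / n with hc
      have hn0 : (0 : ℝ) < n := by
        have : 0 < n := lt_of_lt_of_le (by omega) hn
        exact_mod_cast this
      have hc0 : 0 ≤ c := by
        rw [hc]
        have : (k : ℝ) / n ≤ 1 := by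
          rw [div_le_one hn0]; exact_mod_cast hn
        linarith
      have hc1 : c ≤ 1 := by
        rw [hc]
        have : (0 : ℝ) ≤ (k : ℝ) / n := by positivity
        linarith
      rw [hnum x, hnum2 x]
      set E : ℝ := Real.exp (-(β * x)) with hE
      have hE0 : 0 < E := Real.exp_pos _
      have hEt : E ≤ t := by
        rw [hE, ht]
        apply Real.exp_le_exp.2
        nlinarith
      have hcE : c * E ≤ t := le_trans (by nlinarith) hEt
      have hden : (1 - t) ^ 2 ≤
          |1 - 2 * c * E * Real.cos (2 * x * Real.sin (π * α / 2)) + c ^ 2 * E ^ 2| := by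
        refine le_trans ?_ (den_abs_bound c E _ hc0 hE0.le)
        have h1 : 0 ≤ 1 - t := by linarith
        have h2 : 1 - t ≤ 1 - c * E := by linarith
        nlinarith
      have hpos : (0 : ℝ) < (1 - t) ^ 2 := pow_pos (by linarith) 2
      calc E / |1 - 2 * c * E * Real.cos (2 * x * Real.sin (π * α / 2)) + c ^ 2 * E ^ 2|
          ≤ E / (1 - t) ^ 2 := div_le_div_of_nonneg_left hE0.le hpos hden
        _ = ((1 - t) ^ 2)⁻¹ * E := by rw [div_eq_inv_mul]
    · -- α > 1/2 : β < 0
      have hcosA : Real.cos (π * α) < 0 := by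
        apply Real.cos_neg_of_pi_div_two_lt_of_lt <;> nlinarith
      have hβneg : β < 0 := div_neg_of_neg_of_pos hcosA hB
      set t : ℝ := Real.exp (β * b) with ht
      have ht0 : 0 < t := Real.exp_pos _
      have ht1 : t < 1 := by
        rw [ht]
        apply Real.exp_lt_one_iff.2
        nlinarith
      set d : ℝ := (1 - t) / 2 with hd
      have hd0 : 0 < d := by rw [hd]; linarith
      set c₀ : ℝ := (1 + t) / 2 with hc₀
      have hc₀0 : 0 < c₀ := by rw [hc₀]; linarith
      have hc₀1 : c₀ < 1 := by rw [hc₀]; linarith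
      refine ⟨(d ^ 2)⁻¹, -β, by linarith, ?_⟩
      filter_upwards [hctend.eventually (eventually_ge_nhds hc₀1)] with n hn x hx
      have hx' : b < x := hx
      set c : ℝ := 1 - (k : ℝ) / n with hc
      have hc0 : 0 ≤ c := le_trans hc₀0.le hn
      rw [hnum x, hnum2 x]
      set E : ℝ := Real.exp (-(β * x)) with hE
      have hE0 : 0 < E := Real.exp_pos _
      have htE : 1 ≤ t * E := by
        rw [ht, hE, ← Real.exp_add]
        apply Real.one_le_exp
        nlinarith
      have hkey : d * E ≤ c * E - 1 := by
        have h1 : c₀ * E ≤ c * E := mul_le_mul_of_nonneg_right hn hE0.le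
        have h2 : d * E = c₀ * E - t * E := by rw [hd, hc₀]; ring
        linarith
      have hdE : 0 < d * E := mul_pos hd0 hE0
      have hden : (d * E) ^ 2 ≤
          |1 - 2 * c * E * Real.cos (2 * x * Real.sin (π * α / 2)) + c ^ 2 * E ^ 2| := by
        refine le_trans ?_ (den_abs_bound c E _ hc0 hE0.le)
        have : (1 - c * E) ^ 2 = (c * E - 1) ^ 2 := by ring
        rw [this]
        exact pow_le_pow_left₀ hdE.le hkey 2
      have hpos : (0 : ℝ) < (d * E) ^ 2 := by positivity
      have heq : E / (d * E) ^ 2 = (d ^ 2)⁻¹ * Real.exp (-(-β * x)) := by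
        have hEinv : Real.exp (-(-β * x)) = E⁻¹ := by
          rw [hE, ← Real.exp_neg]
          congr 1; ring
        rw [hEinv]
        field_simp
      calc E / |1 - 2 * c * E * Real.cos (2 * x * Real.sin (π * α / 2)) + c ^ 2 * E ^ 2|
          ≤ E / (d * E) ^ 2 := div_le_div_of_nonneg_left hE0.le hpos hden
        _ = (d ^ 2)⁻¹ * Real.exp (-(-β * x)) := heq
  -- conclude by comparison with the integrable function `K * exp (-(m x))`
  apply tendsto_div_helper _ (∫ x in Set.Ioi b, K * Real.exp (-m * x))
  · intro n
    exact integral_nonneg fun x => div_nonneg (Real.exp_nonneg _) (abs_nonneg _)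
  · filter_upwards [hev] with n hn
    refine integral_mono_of_nonneg ?_ ((exp_neg_integrableOn_Ioi b hm).const_mul K) ?_
    · exact ae_of_all _ fun x => div_nonneg (Real.exp_nonneg _) (abs_nonneg _)
    · refine (ae_restrict_iff' measurableSet_Ioi).2 (ae_of_all _ fun x hx => ?_)
      have := hn x hx
      simpa [neg_mul] using this
end

section
/- Let n > k ≥ 2 be integers, s > 0, and j ≥ 1 an integer. Then ∫_{2πj}^{2π(j+1)} e^{−s x²/2} · (sin x / x) · 1/(2(n−k)(1 − cos x) + k²) dx > 0. -/
open MeasureTheory Real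

/-!
Write the integrand as `w x * sin x * c (cos x)` with `w x = exp (-s x² / 2) / x` strictly
decreasing on `x > 0` and `c t = 1 / (2 (n - k) (1 - t) + k²)` positive on `[-1, 1]`.
On `[2πj, 2π(j+1)]`, reflecting the second half onto the first by `x ↦ 4πj + 2π - x` flips the
sign of `sin` and fixes `cos`, so the integral becomes
`∫ x in 2πj..2πj + π, sin x * c (cos x) * (w x - w (4πj + 2π - x))`, with positive integrand.
-/

theorem intervalIntegral.integral_eq_integral_add_reflect {E : Type*} [NormedAddCommGroup E]
    [NormedSpace ℝ E] {f : ℝ → E} {a p : ℝ}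
    (hf : IntervalIntegrable f volume a (a + 2 * p)) :
    ∫ x in a..a + 2 * p, f x = ∫ x in a..a + p, (f x + f (2 * a + 2 * p - x)) := by
  have hmid : a + p ∈ Set.uIcc a (a + 2 * p) := by
    rcases le_total 0 p with hp | hp
    · exact Set.mem_uIcc_of_le (by linarith) (by linarith)
    · exact Set.mem_uIcc_of_ge (by linarith) (by linarith)
  have hleft := hf.mono_set (Set.uIcc_subset_uIcc_left hmid)
  have hright := hf.mono_set (Set.uIcc_subset_uIcc_right hmid)
  have hreflect : IntervalIntegrable (fun x ↦ f (2 * a + 2 * p - x)) volume a (a + p) := by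
    have := (hright.comp_sub_left (2 * a + 2 * p)).symm
    ring_nf at this ⊢
    exact this
  rw [intervalIntegral.integral_add hleft hreflect, intervalIntegral.integral_comp_sub_left,
    ← intervalIntegral.integral_add_adjacent_intervals hleft hright]
  congr 2 <;> ring

theorem sin_pos_of_mem_Ioo_two_pi_mul {j : ℤ} {x : ℝ}
    (hx : x ∈ Set.Ioo (2 * π * j) (2 * π * j + π)) : 0 < sin x := by
  rw [← sin_sub_int_mul_two_pi x j]
  exact sin_pos_of_pos_of_lt_pi (by linarith [hx.1]) (by linarith [hx.2])

theorem integral_mul_sin_mul_comp_cos_pos {w c : ℝ → ℝ} (j : ℤ)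
    (hw : StrictAntiOn w (Set.Icc (2 * π * j) (2 * π * (j + 1))))
    (hwc : ContinuousOn w (Set.Icc (2 * π * j) (2 * π * (j + 1))))
    (hc : ContinuousOn c (Set.Icc (-1) 1)) (hc_pos : ∀ t ∈ Set.Icc (-1 : ℝ) 1, 0 < c t) :
    0 < ∫ x in 2 * π * j..2 * π * (j + 1), w x * sin x * c (cos x) := by
  set a : ℝ := 2 * π * j
  set F : ℝ → ℝ := fun x ↦ w x * sin x * c (cos x)
  have hb : 2 * π * ((j : ℝ) + 1) = a + 2 * π := by ring
  have hc_cos : ContinuousOn (c ∘ cos) Set.univ :=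
    hc.comp continuous_cos.continuousOn fun x _ ↦ ⟨neg_one_le_cos x, cos_le_one x⟩
  have hF : ContinuousOn F (Set.Icc a (a + 2 * π)) := by
    rw [← hb]
    exact (hwc.mul continuous_sin.continuousOn).mul (hc_cos.mono (Set.subset_univ _))
  have hreflect : Set.MapsTo (fun x ↦ 2 * a + 2 * π - x) (Set.Icc a (a + π))
      (Set.Icc a (a + 2 * π)) := fun x hx ↦ ⟨by linarith [hx.2, pi_pos], by linarith [hx.1]⟩
  have hsum : ContinuousOn (fun x ↦ F x + F (2 * a + 2 * π - x)) (Set.Icc a (a + π)) :=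
    (hF.mono (Set.Icc_subset_Icc_right (by linarith [pi_pos]))).add
      (hF.comp (by fun_prop) hreflect)
  rw [hb, intervalIntegral.integral_eq_integral_add_reflect
    (hF.intervalIntegrable_of_Icc (by linarith [pi_pos]))]
  refine intervalIntegral.intervalIntegral_pos_of_pos_on
    (hsum.intervalIntegrable_of_Icc (by linarith [pi_pos])) (fun x hx ↦ ?_) (by linarith [pi_pos])
  have hy : 2 * a + 2 * π - x = -x + ((2 * j + 1 : ℤ) : ℝ) * (2 * π) := by push_cast; ring
  have hsin : sin (2 * a + 2 * π - x) = -sin x := by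
    rw [hy, sin_add_int_mul_two_pi, sin_neg]
  have hcos : cos (2 * a + 2 * π - x) = cos x := by
    rw [hy, cos_add_int_mul_two_pi, cos_neg]
  have hwx : w (2 * a + 2 * π - x) < w x := by
    refine hw ?_ ?_ (by linarith [hx.2]) <;> constructor <;> linarith [hx.1, hx.2]
  calc 0 < sin x * c (cos x) * (w x - w (2 * a + 2 * π - x)) :=
        mul_pos (mul_pos (sin_pos_of_mem_Ioo_two_pi_mul hx)
          (hc_pos _ ⟨neg_one_le_cos x, cos_le_one x⟩)) (sub_pos.2 hwx)
    _ = F x + F (2 * a + 2 * π - x) := by simp only [F, hsin, hcos]; ring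

theorem strictAntiOn_exp_neg_mul_sq_div {s : ℝ} (hs : 0 ≤ s) :
    StrictAntiOn (fun x ↦ exp (-s * x ^ 2 / 2) / x) (Set.Ioi 0) := by
  intro x hx y hy hxy
  have hexp : exp (-s * y ^ 2 / 2) ≤ exp (-s * x ^ 2 / 2) :=
    exp_le_exp.2 (by nlinarith [mul_le_mul_of_nonneg_left (pow_le_pow_left₀ hx.le hxy.le 2) hs])
  calc exp (-s * y ^ 2 / 2) / y ≤ exp (-s * x ^ 2 / 2) / y :=
        div_le_div_of_nonneg_right hexp hy.le
    _ < exp (-s * x ^ 2 / 2) / x := div_lt_div_of_pos_left (exp_pos _) hx hxy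

/-- positivity of the integral over one period `[2πj, 2π(j+1)]`. -/
theorem period_integral_pos
    (n k : ℕ) (hk : 2 ≤ k) (hkn : k < n) (s : ℝ) (hs : 0 < s) (j : ℕ) (hj : 1 ≤ j) :
    0 <
      ∫ x in Set.Icc (2 * π * j) (2 * π * (j + 1)),
        Real.exp (-s * x ^ 2 / 2) * (Real.sin x / x) *
          (1 / (2 * ((n : ℝ) - k) * (1 - Real.cos x) + k ^ 2)) := by
  have hD : ∀ t ∈ Set.Icc (-1 : ℝ) 1, 0 < 2 * ((n : ℝ) - k) * (1 - t) + k ^ 2 := by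
    intro t ht
    have : 0 ≤ ((n : ℝ) - k) * (1 - t) :=
      mul_nonneg (sub_nonneg.2 (by exact_mod_cast hkn.le)) (sub_nonneg.2 ht.2)
    have : (0 : ℝ) < k := by exact_mod_cast (by omega : 0 < k)
    nlinarith
  have hpos : Set.Icc (2 * π * ((j : ℤ) : ℝ)) (2 * π * ((j : ℤ) + 1)) ⊆ Set.Ioi 0 := by
    intro x hx
    have : (1 : ℝ) ≤ j := by exact_mod_cast hj
    simp only [Int.cast_natCast, Set.mem_Icc] at hx
    exact lt_of_lt_of_le (by positivity) hx.1
  have key := integral_mul_sin_mul_comp_cos_pos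
    (c := fun t ↦ 1 / (2 * ((n : ℝ) - k) * (1 - t) + k ^ 2)) (j : ℤ)
    ((strictAntiOn_exp_neg_mul_sq_div hs.le).mono hpos)
    ((ContinuousOn.div (by fun_prop) continuousOn_id fun x hx ↦ ne_of_gt hx).mono hpos)
    (continuousOn_const.div (by fun_prop) fun t ht ↦ (hD t ht).ne')
    fun t ht ↦ one_div_pos.2 (hD t ht)
  push_cast at key
  rw [integral_Icc_eq_integral_Ioc, ← intervalIntegral.integral_of_le (by nlinarith [pi_pos])]
  exact key.trans_eq (intervalIntegral.integral_congr fun x _ ↦ by ring)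
end

section
/- Let α ∈ (0,1) and define g_α(u) = (sin(πα)/(πα)) ∫₀^∞ e^{−u (ξ cos(πα/2))^{1/α}} / (ξ² + 2ξ cos(πα) + 1) dξ for u > 0. Then lim_{u→∞} u^α · g_α(u) = (2/π) Γ(α) sin(πα/2), where Γ is the Gamma function. -/
open MeasureTheory Real Filter Topology

/-- `g_α(u) = (sin(πα)/(πα)) ∫₀^∞ e^{−u (ξ cos(πα/2))^{1/α}} / (ξ² + 2ξ cos(πα) + 1) dξ`. -/
noncomputable def gStable (α : ℝ) (u : ℝ) : ℝ :=
  (Real.sin (π * α) / (π * α)) *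
    ∫ ξ in Set.Ioi (0 : ℝ),
      Real.exp (-u * (ξ * Real.cos (π * α / 2)) ^ (1 / α)) /
        (ξ ^ 2 + 2 * ξ * Real.cos (π * α) + 1)

/-!
Substituting `ξ = u^{-α} s` gives
`u^α g_α(u) = (sin(πα)/(πα)) ∫₀^∞ e^{−(s cos(πα/2))^{1/α}} / D(u^{-α} s) ds` with
`D(x) = x² + 2x cos(πα) + 1 ≥ sin²(πα) > 0`. As `u → ∞` the denominator tends to `D(0) = 1`
under a uniform bound, so dominated convergence leaves `∫₀^∞ e^{−(s c)^{1/α}} ds = Γ(α + 1)/c`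
with `c = cos(πα/2)`, and `sin(πα) = 2 sin(πα/2) c` finishes the computation.
-/

lemma sin_sq_le_sq_add_two_mul_mul_cos_add_one (θ x : ℝ) :
    Real.sin θ ^ 2 ≤ x ^ 2 + 2 * x * Real.cos θ + 1 := by
  nlinarith [sq_nonneg (x + Real.cos θ), Real.sin_sq_add_cos_sq θ]

lemma exp_neg_mul_rpow_eq_exp_neg_rpow_mul_rpow {p c s : ℝ} (hc : 0 ≤ c) (hs : 0 ≤ s) :
    Real.exp (-(s * c) ^ p) = Real.exp (-(c ^ p) * s ^ p) := by
  rw [Real.mul_rpow hs hc, neg_mul, mul_comm]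

lemma integrableOn_exp_neg_mul_rpow_Ioi {p c : ℝ} (hp : 0 < p) (hc : 0 < c) :
    IntegrableOn (fun s : ℝ => Real.exp (-(s * c) ^ p)) (Set.Ioi 0) := by
  refine (integrableOn_rpow_mul_exp_neg_mul_rpow (s := 0) neg_one_lt_zero hp
    (Real.rpow_pos_of_pos hc p)).congr_fun (fun s hs => ?_) measurableSet_Ioi
  simp only [Real.rpow_zero, one_mul, exp_neg_mul_rpow_eq_exp_neg_rpow_mul_rpow hc.le (le_of_lt hs)]

lemma integral_exp_neg_mul_rpow_Ioi {p c : ℝ} (hp : 0 < p) (hc : 0 < c) :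
    ∫ s in Set.Ioi (0 : ℝ), Real.exp (-(s * c) ^ p) = Real.Gamma (1 / p + 1) / c := by
  rw [setIntegral_congr_fun measurableSet_Ioi
      (fun s hs => exp_neg_mul_rpow_eq_exp_neg_rpow_mul_rpow (p := p) hc.le (le_of_lt hs)),
    integral_exp_neg_mul_rpow hp (Real.rpow_pos_of_pos hc p), ← Real.rpow_mul hc.le,
    mul_div_assoc', mul_neg_one, neg_div_self hp.ne', Real.rpow_neg_one, one_div,
    inv_mul_eq_div]

lemma rpow_mul_integral_exp_neg_mul_rpow_div {α u c : ℝ} (hα : α ≠ 0) (hu : 0 < u)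
    (hc : 0 ≤ c) (D : ℝ → ℝ) :
    u ^ α * ∫ ξ in Set.Ioi (0 : ℝ), Real.exp (-u * (ξ * c) ^ (1 / α)) / D ξ =
      ∫ s in Set.Ioi (0 : ℝ), Real.exp (-(s * c) ^ (1 / α)) / D (u ^ (-α) * s) := by
  have hb : 0 < u ^ (-α) := Real.rpow_pos_of_pos hu _
  have hsubst := integral_comp_mul_left_Ioi
    (fun ξ => Real.exp (-u * (ξ * c) ^ (1 / α)) / D ξ) 0 hb
  rw [mul_zero, smul_eq_mul, Real.rpow_neg hu.le, inv_inv, ← Real.rpow_neg hu.le] at hsubst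
  rw [← hsubst]
  refine setIntegral_congr_fun measurableSet_Ioi (fun s hs => ?_)
  have hu_pow : -u * (u ^ (-α) * s * c) ^ (1 / α) = -(s * c) ^ (1 / α) := by
    rw [mul_assoc, Real.mul_rpow hb.le (mul_nonneg (le_of_lt hs) hc), ← Real.rpow_mul hu.le,
      show -α * (1 / α) = -1 by field_simp, Real.rpow_neg_one, ← mul_assoc, neg_mul,
      mul_inv_cancel₀ hu.ne', neg_one_mul]
  simp only [hu_pow]

lemma tendsto_integral_div_comp_mul {ι : Type*} {l : Filter ι} [l.IsCountablyGenerated]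
    {μ : Measure ℝ} {g D : ℝ → ℝ} {m : ℝ} {ε : ι → ℝ} (hg : Integrable g μ) (hD : Continuous D)
    (hm : 0 < m) (hDm : ∀ x, m ≤ D x) (hε : Tendsto ε l (𝓝 0)) :
    Tendsto (fun i => ∫ s, g s / D (ε i * s) ∂μ) l (𝓝 ((∫ s, g s ∂μ) / D 0)) := by
  rw [← integral_div]
  refine tendsto_integral_filter_of_dominated_convergence (fun s => ‖g s‖ / m)
    (Eventually.of_forall fun i => hg.aestronglyMeasurable.div₀
      (hD.comp (continuous_const.mul continuous_id)).aestronglyMeasurable)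
    (Eventually.of_forall fun i => Eventually.of_forall fun s => ?_) (hg.norm.div_const m)
    (Eventually.of_forall fun s => ?_)
  · rw [norm_div, Real.norm_of_nonneg (hm.trans_le (hDm _)).le]
    exact div_le_div_of_nonneg_left (norm_nonneg _) hm (hDm _)
  · have hεs : Tendsto (fun i => ε i * s) l (𝓝 0) := by simpa using hε.mul_const s
    exact tendsto_const_nhds.div ((hD.tendsto 0).comp hεs) (hm.trans_le (hDm 0)).ne'

/-- `u^α g_α(u) → (2/π) Γ(α) sin(πα/2)` as `u → ∞`. -/
theorem gStable_asymptotics (α : ℝ) (hα : α ∈ Set.Ioo (0 : ℝ) 1) :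
    Tendsto (fun u : ℝ => u ^ α * gStable α u) atTop
      (𝓝 ((2 / π) * Real.Gamma α * Real.sin (π * α / 2))) := by
  obtain ⟨hα0, hα1⟩ := hα
  have hcos : 0 < Real.cos (π * α / 2) :=
    Real.cos_pos_of_mem_Ioo ⟨by nlinarith [pi_pos], by nlinarith [pi_pos]⟩
  have hsin : 0 < Real.sin (π * α) :=
    Real.sin_pos_of_pos_of_lt_pi (by positivity) (by nlinarith [pi_pos])
  have hscaled : (fun u : ℝ => u ^ α * gStable α u) =ᶠ[atTop] fun u =>
      Real.sin (π * α) / (π * α) *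
        ∫ s in Set.Ioi (0 : ℝ), Real.exp (-(s * Real.cos (π * α / 2)) ^ (1 / α)) /
          ((u ^ (-α) * s) ^ 2 + 2 * (u ^ (-α) * s) * Real.cos (π * α) + 1) := by
    filter_upwards [eventually_gt_atTop 0] with u hu
    rw [gStable, mul_left_comm, rpow_mul_integral_exp_neg_mul_rpow_div hα0.ne' hu hcos.le]
  have hlim := (tendsto_integral_div_comp_mul
    (D := fun x => x ^ 2 + 2 * x * Real.cos (π * α) + 1)
    (integrableOn_exp_neg_mul_rpow_Ioi (one_div_pos.2 hα0) hcos) (by fun_prop)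
    (pow_pos hsin 2) (sin_sq_le_sq_add_two_mul_mul_cos_add_one (π * α))
    (tendsto_rpow_neg_atTop hα0)).const_mul (Real.sin (π * α) / (π * α))
  rw [integral_exp_neg_mul_rpow_Ioi (one_div_pos.2 hα0) hcos, one_div_one_div,
    Real.Gamma_add_one hα0.ne'] at hlim
  convert hlim.congr' hscaled.symm using 2
  rw [show π * α = 2 * (π * α / 2) by ring, Real.sin_two_mul]
  field_simp
  ring
end

section
/- Let α ∈ (0,1), t > 0, and define g_α(u) = (sin(πα)/(πα)) ∫₀^∞ e^{−u (ξ cos(πα/2))^{1/α}} / (ξ² + 2ξ cos(πα) + 1) dξ for u > 0. Then lim_{p→∞, p ∈ ℕ} (1/p) · g_α(t (2p)^{1/α}) / g_α(t p^{1/α})² = π t^α / (4 Γ(α) sin(πα/2)). In particular, for all sufficiently large p ∈ ℕ, g_α(t(2p)^{1/α}) ≠ g_α(t p^{1/α})². -/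
open MeasureTheory Real Filter Topology

/-!
The substitution `ξ = s u^{-α}` gives
`u^α g_α(u) = (sin(πα)/(πα)) ∫₀^∞ e^{-(c s)^{1/α}} / q(s u^{-α}) ds`, where `c = cos(πα/2)` and
`q(x) = x² + 2x cos(πα) + 1 ≥ sin²(πα) > 0`. By dominated convergence the integral tends to the
Gamma integral `Γ(α + 1) / c`, so `u^α g_α(u) → L = sin(πα) Γ(α) / (π c)`. Evaluated at
`u = t (2p)^{1/α}` and `u = t p^{1/α}`, this makes the ratio tend to `t^α / (2L)`, which is the
claimed constant because `sin(πα) = 2 sin(πα/2) cos(πα/2)`. If the two values of `g_α` coincided,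
the ratio would be at most `1/p → 0`, contradicting the positive limit.
-/

lemma sin_sq_le_sq_add_two_mul_cos_add_one (θ x : ℝ) :
    sin θ ^ 2 ≤ x ^ 2 + 2 * x * cos θ + 1 := by
  nlinarith [sin_sq_add_cos_sq θ, sq_nonneg (x + cos θ)]

lemma tendsto_setIntegral_div_sq_add_two_mul_cos_add_one {θ : ℝ} (hθ : sin θ ≠ 0) {f : ℝ → ℝ}
    (hf : IntegrableOn f (Set.Ioi 0)) :
    Tendsto (fun ε : ℝ => ∫ s in Set.Ioi 0, f s / ((s * ε) ^ 2 + 2 * (s * ε) * cos θ + 1))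
      (𝓝 0) (𝓝 (∫ s in Set.Ioi 0, f s)) := by
  have hsin : 0 < sin θ ^ 2 := by positivity
  have hq : ∀ x : ℝ, 0 < x ^ 2 + 2 * x * cos θ + 1 := fun x =>
    hsin.trans_le (sin_sq_le_sq_add_two_mul_cos_add_one θ x)
  refine tendsto_integral_filter_of_dominated_convergence (fun s => ‖f s‖ / sin θ ^ 2)
    (Eventually.of_forall fun ε => hf.aestronglyMeasurable.mul
      (Continuous.aestronglyMeasurable ((by fun_prop : Continuous fun s : ℝ =>
        (s * ε) ^ 2 + 2 * (s * ε) * cos θ + 1).inv₀ fun s => (hq _).ne')))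
    (Eventually.of_forall fun ε => Eventually.of_forall fun s => ?_)
    (hf.norm.div_const _) (Eventually.of_forall fun s => ?_)
  · rw [norm_div, norm_of_nonneg (hq _).le]
    exact div_le_div_of_nonneg_left (norm_nonneg _) hsin (sin_sq_le_sq_add_two_mul_cos_add_one θ _)
  · have hcont : Continuous fun ε : ℝ => f s / ((s * ε) ^ 2 + 2 * (s * ε) * cos θ + 1) :=
      continuous_const.div (by fun_prop) fun ε => (hq _).ne'
    simpa using hcont.tendsto 0

lemma rpow_mul_gStable_eq {α u : ℝ} (hα : α ≠ 0) (hc : 0 ≤ cos (π * α / 2)) (hu : 0 < u) :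
    u ^ α * gStable α u = sin (π * α) / (π * α) *
      ∫ s in Set.Ioi 0, exp (-cos (π * α / 2) ^ (1 / α) * s ^ (1 / α)) /
        ((s * u ^ (-α)) ^ 2 + 2 * (s * u ^ (-α)) * cos (π * α) + 1) := by
  set G : ℝ → ℝ := fun s => exp (-cos (π * α / 2) ^ (1 / α) * s ^ (1 / α)) /
    ((s * u ^ (-α)) ^ 2 + 2 * (s * u ^ (-α)) * cos (π * α) + 1)
  have hua : 0 < u ^ α := rpow_pos_of_pos hu α
  have hsubst : ∀ ξ ∈ Set.Ioi (0 : ℝ), exp (-u * (ξ * cos (π * α / 2)) ^ (1 / α)) /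
      (ξ ^ 2 + 2 * ξ * cos (π * α) + 1) = G (u ^ α * ξ) := fun ξ hξ => by
    have hscale : u ^ α * ξ * u ^ (-α) = ξ := by
      rw [mul_right_comm, ← rpow_add hu, add_neg_cancel, rpow_zero, one_mul]
    have hpow : (u ^ α * ξ) ^ (1 / α) = u * ξ ^ (1 / α) := by
      rw [mul_rpow hua.le (le_of_lt hξ), ← rpow_mul hu.le, mul_one_div_cancel hα, rpow_one]
    simp only [G, hscale, hpow, mul_rpow (le_of_lt hξ) hc]
    ring_nf
  rw [gStable, setIntegral_congr_fun measurableSet_Ioi hsubst,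
    integral_comp_mul_left_Ioi G 0 hua, mul_zero, smul_eq_mul, mul_left_comm,
    mul_inv_cancel_left₀ hua.ne']

lemma tendsto_rpow_mul_gStable_atTop {α : ℝ} (hα : α ∈ Set.Ioo 0 1) :
    Tendsto (fun u => u ^ α * gStable α u) atTop
      (𝓝 (sin (π * α) * Gamma α / (π * cos (π * α / 2)))) := by
  obtain ⟨hα0, hα1⟩ := hα
  have hsin : 0 < sin (π * α) := sin_pos_of_pos_of_lt_pi (by positivity) (by nlinarith [pi_pos])
  have hc : 0 < cos (π * α / 2) := cos_pos_of_mem_Ioo ⟨by nlinarith [pi_pos], by nlinarith [pi_pos]⟩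
  have hp : 0 < 1 / α := by positivity
  have hb : 0 < cos (π * α / 2) ^ (1 / α) := rpow_pos_of_pos hc _
  have hint : IntegrableOn (fun s : ℝ => exp (-cos (π * α / 2) ^ (1 / α) * s ^ (1 / α)))
      (Set.Ioi 0) := by
    simpa using integrableOn_rpow_mul_exp_neg_mul_rpow (s := 0) neg_one_lt_zero hp hb
  have hlim := ((tendsto_setIntegral_div_sq_add_two_mul_cos_add_one hsin.ne' hint).comp
    (tendsto_rpow_neg_atTop hα0)).const_mul (sin (π * α) / (π * α))
  have hval : sin (π * α) / (π * α) *
      ((cos (π * α / 2) ^ (1 / α)) ^ (-1 / (1 / α)) * Gamma (1 / (1 / α) + 1)) =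
      sin (π * α) * Gamma α / (π * cos (π * α / 2)) := by
    rw [← rpow_mul hc.le, show 1 / α * (-1 / (1 / α)) = -1 by field_simp, rpow_neg_one,
      one_div_one_div, Gamma_add_one hα0.ne']
    field_simp
  rw [integral_exp_neg_mul_rpow hp hb, hval] at hlim
  exact hlim.congr' ((eventually_gt_atTop 0).mono fun u hu =>
    (rpow_mul_gStable_eq hα0.ne' hc.le hu).symm)

lemma tendsto_one_div_mul_div_sq_of_tendsto_rpow_mul {g : ℝ → ℝ} {α t L : ℝ} (hα : 0 < α)
    (ht : 0 < t) (hL : L ≠ 0) (hg : Tendsto (fun u => u ^ α * g u) atTop (𝓝 L)) :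
    Tendsto (fun p : ℕ => (1 / (p : ℝ)) * (g (t * (2 * (p : ℝ)) ^ (1 / α)) /
      g (t * (p : ℝ) ^ (1 / α)) ^ 2)) atTop (𝓝 (t ^ α / (2 * L))) := by
  have hpow : ∀ x : ℝ, 0 ≤ x → (t * x ^ (1 / α)) ^ α = t ^ α * x := fun x hx => by
    rw [mul_rpow ht.le (rpow_nonneg hx _), ← rpow_mul hx, one_div_mul_cancel hα.ne', rpow_one]
  have hscale : ∀ {x : ℕ → ℝ}, Tendsto x atTop atTop →
      Tendsto (fun p => t * x p ^ (1 / α)) atTop atTop := fun hx =>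
    ((tendsto_rpow_atTop (by positivity)).comp hx).const_mul_atTop ht
  have hnat := tendsto_natCast_atTop_atTop (R := ℝ)
  have hA := hg.comp (hscale (hnat.const_mul_atTop two_pos))
  have hB := hg.comp (hscale hnat)
  have hlim := (hA.div (hB.pow 2) (pow_ne_zero 2 hL)).const_mul (t ^ α / 2)
  rw [show t ^ α / 2 * (L / L ^ 2) = t ^ α / (2 * L) by field_simp] at hlim
  refine hlim.congr' ((eventually_gt_atTop 0).mono fun p hp => ?_)
  have hp' : (0 : ℝ) < p := Nat.cast_pos.2 hp
  simp only [Pi.div_apply, Function.comp_apply, hpow _ hp'.le,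
    hpow _ (by positivity : (0 : ℝ) ≤ 2 * p)]
  rcases eq_or_ne (g (t * (p : ℝ) ^ (1 / α))) 0 with h | h
  · rw [h]; simp
  · field_simp

lemma eventually_ne_of_tendsto_mul_div {ι 𝕜 : Type*} [NormedField 𝕜] {l : Filter ι}
    {c a b : ι → 𝕜} {L : 𝕜} (hc : Tendsto c l (𝓝 0)) (hL : L ≠ 0)
    (h : Tendsto (fun i => c i * (a i / b i)) l (𝓝 L)) : ∀ᶠ i in l, a i ≠ b i := by
  have hL' : 0 < ‖L‖ := norm_pos_iff.2 hL
  filter_upwards [h.norm.eventually (eventually_gt_nhds (half_lt_self hL')),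
    hc.norm.eventually (eventually_lt_nhds (show ‖(0 : 𝕜)‖ < ‖L‖ / 2 by simpa))]
    with i hlarge hsmall hab
  have hle : ‖c i * (b i / b i)‖ ≤ ‖c i‖ := by
    rw [norm_mul, norm_div]
    exact mul_le_of_le_one_right (norm_nonneg _) (div_self_le_one _)
  rw [hab] at hlarge
  linarith

/-- `(1/p) g_α(t(2p)^{1/α}) / g_α(t p^{1/α})² → π t^α / (4 Γ(α) sin(πα/2))`
along `p ∈ ℕ`, and in particular for large `p` one has
`g_α(t(2p)^{1/α}) ≠ g_α(t p^{1/α})²`. -/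
theorem gStable_ratio_asymptotics (α : ℝ) (hα : α ∈ Set.Ioo (0 : ℝ) 1) (t : ℝ) (ht : 0 < t) :
    Tendsto
      (fun p : ℕ =>
        (1 / (p : ℝ)) *
          (gStable α (t * (2 * (p : ℝ)) ^ (1 / α)) / gStable α (t * (p : ℝ) ^ (1 / α)) ^ 2))
      atTop (𝓝 (π * t ^ α / (4 * Real.Gamma α * Real.sin (π * α / 2)))) ∧
    ∀ᶠ p : ℕ in atTop,
      gStable α (t * (2 * (p : ℝ)) ^ (1 / α)) ≠ gStable α (t * (p : ℝ) ^ (1 / α)) ^ 2 := by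
  have ⟨hα0, hα1⟩ := hα
  have hΓ : 0 < Gamma α := Gamma_pos_of_pos hα0
  have hsin : 0 < sin (π * α / 2) :=
    sin_pos_of_pos_of_lt_pi (by positivity) (by nlinarith [pi_pos])
  have hcos : 0 < cos (π * α / 2) :=
    cos_pos_of_mem_Ioo ⟨by nlinarith [pi_pos], by nlinarith [pi_pos]⟩
  have hsin_two_mul : sin (π * α) = 2 * sin (π * α / 2) * cos (π * α / 2) := by
    rw [← sin_two_mul]; ring_nf
  have hlim := tendsto_one_div_mul_div_sq_of_tendsto_rpow_mul hα0 ht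
    (by rw [hsin_two_mul]; positivity) (tendsto_rpow_mul_gStable_atTop hα)
  rw [show t ^ α / (2 * (sin (π * α) * Gamma α / (π * cos (π * α / 2)))) =
      π * t ^ α / (4 * Gamma α * sin (π * α / 2)) by rw [hsin_two_mul]; field_simp; ring] at hlim
  exact ⟨hlim, eventually_ne_of_tendsto_mul_div tendsto_one_div_atTop_nhds_zero_nat
    (by positivity) hlim⟩
end

section
/- For all reals a > 0 and t > 0, lim_{R→∞} ∫_{−R}^{R} e^{−itξ} / (a − iξ) dξ = 2π e^{−at}, where the integrand is a complex-valued function of the real variable ξ and i is the imaginary unit. -/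
/-!
Integrating by parts, `t ∫_{-R}^{R} e^{-itξ}/(a - iξ) dξ` equals `∫_{-R}^{R} e^{-itξ}/(a - iξ)² dξ`
plus boundary terms of size `O(1/R)`. The new integrand is absolutely integrable, and after the
substitution `ξ = -2πw` it is the inverse Fourier transform of `(a + 2πiw)⁻²`, the Fourier
transform of `x ↦ x₊ e^{-a x₊}`. Fourier inversion at `t > 0` then gives `2π t e^{-at}`.
-/

open MeasureTheory Real Filter Topology Complex Set
open scoped FourierTransform

lemma norm_cexp_neg_I_mul_mul (t ξ : ℝ) : ‖cexp (-I * t * ξ)‖ = 1 := by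
  simp [norm_exp]

lemma norm_ofReal_sub_I_mul_sq (a ξ : ℝ) : ‖(a : ℂ) - I * ξ‖ ^ 2 = a ^ 2 + ξ ^ 2 := by
  rw [← normSq_eq_norm_sq, normSq_apply]
  simp
  ring

lemma ofReal_sub_I_mul_ne_zero {a : ℝ} (ha : a ≠ 0) (ξ : ℝ) : (a : ℂ) - I * ξ ≠ 0 := by
  intro h
  simpa [ha] using congrArg re h

lemma integrableOn_mul_cexp_neg_mul_Ioi {c : ℂ} (hc : 0 < c.re) :
    IntegrableOn (fun x : ℝ => (x : ℂ) * cexp (-(c * x))) (Ioi 0) := by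
  have hbound : IntegrableOn (fun x : ℝ => x ^ (1 : ℝ) * rexp (-c.re * x ^ (1 : ℝ))) (Ioi 0) :=
    integrableOn_rpow_mul_exp_neg_mul_rpow (by norm_num) one_pos hc
  refine hbound.mono' (by fun_prop) ?_
  filter_upwards [ae_restrict_mem measurableSet_Ioi] with x hx
  simp [norm_exp, abs_of_pos (mem_Ioi.mp hx)]

lemma tendsto_affine_mul_cexp_neg_mul_atTop {c : ℂ} (hc : 0 < c.re) (p q : ℂ) :
    Tendsto (fun x : ℝ => (p * x + q) * cexp (-(c * x))) atTop (𝓝 0) := by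
  have hbound : Tendsto (fun x : ℝ => ‖p‖ * (x ^ (1 : ℝ) * rexp (-c.re * x))
      + ‖q‖ * (x ^ (0 : ℝ) * rexp (-c.re * x))) atTop (𝓝 0) := by
    simpa using ((tendsto_rpow_mul_exp_neg_mul_atTop_nhds_zero 1 _ hc).const_mul ‖p‖).add
      ((tendsto_rpow_mul_exp_neg_mul_atTop_nhds_zero 0 _ hc).const_mul ‖q‖)
  refine squeeze_zero_norm' ?_ hbound
  filter_upwards [eventually_ge_atTop 0] with x hx
  rw [add_mul]
  refine (norm_add_le _ _).trans_eq ?_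
  simp [norm_exp, abs_of_nonneg hx, mul_assoc]

theorem integral_Ioi_mul_cexp_neg_mul {c : ℂ} (hc : 0 < c.re) :
    ∫ x : ℝ in Ioi 0, (x : ℂ) * cexp (-(c * x)) = 1 / c ^ 2 := by
  have hc0 : c ≠ 0 := by rintro rfl; simp at hc
  have hderiv : ∀ x ∈ Ici (0 : ℝ),
      HasDerivAt (fun x : ℝ => (-c⁻¹ * x + -(c ^ 2)⁻¹) * cexp (-(c * x)))
        (x * cexp (-(c * x))) x := by
    intro x _
    have hlin : HasDerivAt (fun x : ℝ => -(c * x)) (-c) x := by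
      simpa using ((hasDerivAt_id (x : ℂ)).const_mul (-c)).comp_ofReal
    have haff : HasDerivAt (fun x : ℝ => -c⁻¹ * x + -(c ^ 2)⁻¹) (-c⁻¹) x := by
      simpa using ((hasDerivAt_id (x : ℂ)).const_mul (-c⁻¹)).comp_ofReal.add_const (-(c ^ 2)⁻¹)
    refine (haff.mul hlin.cexp).congr_deriv ?_
    field_simp
    ring
  rw [integral_Ioi_of_hasDerivAt_of_tendsto' hderiv (integrableOn_mul_cexp_neg_mul_Ioi hc)
    (tendsto_affine_mul_cexp_neg_mul_atTop hc _ _)]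
  simp

noncomputable def posPartMulExp (a x : ℝ) : ℂ := (max x 0 : ℝ) * cexp (-(a * (max x 0 : ℝ)))

lemma continuous_posPartMulExp (a : ℝ) : Continuous (posPartMulExp a) := by
  unfold posPartMulExp; fun_prop

lemma posPartMulExp_of_nonpos {a x : ℝ} (hx : x ≤ 0) : posPartMulExp a x = 0 := by
  simp [posPartMulExp, max_eq_right hx]

lemma posPartMulExp_of_nonneg {a x : ℝ} (hx : 0 ≤ x) :
    posPartMulExp a x = x * cexp (-(a * x)) := by
  simp [posPartMulExp, max_eq_left hx]

lemma integrable_posPartMulExp {a : ℝ} (ha : 0 < a) : Integrable (posPartMulExp a) := by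
  rw [← integrableOn_univ, ← Iic_union_Ioi (a := 0)]
  refine .union (integrableOn_zero.congr_fun (fun x hx => (posPartMulExp_of_nonpos hx).symm)
    measurableSet_Iic) ?_
  exact (integrableOn_mul_cexp_neg_mul_Ioi (c := a) (by simpa)).congr_fun
    (fun x hx => (posPartMulExp_of_nonneg (le_of_lt hx)).symm) measurableSet_Ioi

lemma fourier_posPartMulExp {a : ℝ} (ha : 0 < a) (w : ℝ) :
    𝓕 (posPartMulExp a) w = 1 / ((a : ℂ) + 2 * π * I * w) ^ 2 := by
  rw [← integral_Ioi_mul_cexp_neg_mul (by simpa using ha), Real.fourier_real_eq_integral_exp_smul,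
    ← integral_indicator measurableSet_Ioi]
  congr 1 with x
  rcases le_or_gt x 0 with hx | hx
  · simp [posPartMulExp_of_nonpos hx, indicator_of_notMem (notMem_Ioi.mpr hx)]
  · rw [indicator_of_mem (mem_Ioi.mpr hx), posPartMulExp_of_nonneg hx.le, smul_eq_mul,
      mul_left_comm, ← Complex.exp_add]
    congr 2
    push_cast
    ring

lemma integrable_inv_ofReal_sub_I_mul_sq {a : ℝ} (ha : a ≠ 0) :
    Integrable fun ξ : ℝ => (((a : ℂ) - I * ξ) ^ 2)⁻¹ := by
  have hcont : Continuous fun ξ : ℝ => (((a : ℂ) - I * ξ) ^ 2)⁻¹ :=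
    (by fun_prop : Continuous fun ξ : ℝ => ((a : ℂ) - I * ξ) ^ 2).inv₀
      fun ξ => pow_ne_zero 2 (ofReal_sub_I_mul_ne_zero ha ξ)
  rw [← integrable_norm_iff hcont.aestronglyMeasurable]
  have hnorm : (fun ξ : ℝ => ‖(((a : ℂ) - I * ξ) ^ 2)⁻¹‖)
      = fun ξ => (a ^ 2)⁻¹ * (1 + (ξ / a) ^ 2)⁻¹ := by
    ext ξ
    rw [norm_inv, norm_pow, norm_ofReal_sub_I_mul_sq]
    field_simp
  rw [hnorm]
  exact (integrable_inv_one_add_sq.comp_div ha).const_mul _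

lemma integrable_cexp_div_sq {a : ℝ} (ha : a ≠ 0) (t : ℝ) :
    Integrable fun ξ : ℝ => cexp (-I * t * ξ) / ((a : ℂ) - I * ξ) ^ 2 := by
  simpa only [div_eq_mul_inv] using (integrable_inv_ofReal_sub_I_mul_sq ha).bdd_mul
    (by fun_prop) (ae_of_all _ fun ξ => (norm_cexp_neg_I_mul_mul t ξ).le)

theorem integral_cexp_div_sq {a t : ℝ} (ha : 0 < a) (ht : 0 < t) :
    ∫ ξ : ℝ, cexp (-I * t * ξ) / ((a : ℂ) - I * ξ) ^ 2 = 2 * π * t * cexp (-(a * t)) := by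
  have hfourier : 𝓕 (posPartMulExp a) = fun w => (((a : ℂ) - I * ↑(-(2 * π) * w)) ^ 2)⁻¹ := by
    ext w
    rw [fourier_posPartMulExp ha]
    push_cast
    ring_nf
  have hfourier_int : Integrable (𝓕 (posPartMulExp a)) := hfourier ▸
    (integrable_inv_ofReal_sub_I_mul_sq ha.ne').comp_mul_left' (neg_ne_zero.mpr two_pi_pos.ne')
  have hinv := (integrable_posPartMulExp ha).fourierInv_fourier_eq hfourier_int
    (continuous_posPartMulExp a).continuousAt (v := t)
  rw [Real.fourierInv_eq', posPartMulExp_of_nonneg ht.le, hfourier] at hinv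
  set G := fun ξ : ℝ => cexp (-I * t * ξ) / ((a : ℂ) - I * ξ) ^ 2
  have hG : ∀ v : ℝ, cexp (↑(2 * π * inner ℝ v t) * I) • (((a : ℂ) - I * ↑(-(2 * π) * v)) ^ 2)⁻¹
      = G (-(2 * π) * v) := by
    intro v
    simp only [G, Real.inner_apply, smul_eq_mul, div_eq_mul_inv]
    congr 2
    push_cast
    ring
  simp_rw [hG, Measure.integral_comp_mul_left, abs_inv, abs_neg, abs_of_pos two_pi_pos] at hinv
  rw [← smul_inv_smul₀ two_pi_pos.ne' (∫ ξ, G ξ), hinv, Complex.real_smul]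
  push_cast
  ring

lemma hasDerivAt_cexp_div {a : ℝ} (ha : a ≠ 0) (t ξ : ℝ) :
    HasDerivAt (fun ξ : ℝ => cexp (-I * t * ξ) / ((a : ℂ) - I * ξ))
      (-I * t * (cexp (-I * t * ξ) / ((a : ℂ) - I * ξ))
        + I * (cexp (-I * t * ξ) / ((a : ℂ) - I * ξ) ^ 2)) ξ := by
  have hexp : HasDerivAt (fun ξ : ℝ => cexp (-I * t * ξ)) (cexp (-I * t * ξ) * (-I * t)) ξ := by
    simpa using (((hasDerivAt_id (ξ : ℂ)).const_mul (-I * t)).comp_ofReal).cexp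
  have hden : HasDerivAt (fun ξ : ℝ => (a : ℂ) - I * ξ) (-I) ξ := by
    simpa using (((hasDerivAt_id (ξ : ℂ)).const_mul I).comp_ofReal).const_sub (a : ℂ)
  refine (hexp.div hden (ofReal_sub_I_mul_ne_zero ha ξ)).congr_deriv ?_
  field_simp
  ring

lemma ofReal_mul_intervalIntegral_cexp_div {a : ℝ} (ha : a ≠ 0) (t u v : ℝ) :
    t * ∫ ξ in u..v, cexp (-I * t * ξ) / ((a : ℂ) - I * ξ)
      = (∫ ξ in u..v, cexp (-I * t * ξ) / ((a : ℂ) - I * ξ) ^ 2)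
        + I * (cexp (-I * t * v) / ((a : ℂ) - I * v) - cexp (-I * t * u) / ((a : ℂ) - I * u)) := by
  have hf : Continuous fun ξ : ℝ => cexp (-I * t * ξ) / ((a : ℂ) - I * ξ) :=
    (by fun_prop : Continuous fun ξ : ℝ => cexp (-I * t * ξ)).div (by fun_prop)
      (ofReal_sub_I_mul_ne_zero ha)
  have hG : Continuous fun ξ : ℝ => cexp (-I * t * ξ) / ((a : ℂ) - I * ξ) ^ 2 :=
    (by fun_prop : Continuous fun ξ : ℝ => cexp (-I * t * ξ)).div (by fun_prop)
      fun ξ => pow_ne_zero 2 (ofReal_sub_I_mul_ne_zero ha ξ)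
  have hftc := intervalIntegral.integral_eq_sub_of_hasDerivAt
    (fun ξ _ => hasDerivAt_cexp_div ha t ξ)
    (((hf.const_mul _).add (hG.const_mul _)).intervalIntegrable u v)
  rw [intervalIntegral.integral_add ((hf.const_mul _).intervalIntegrable u v)
    ((hG.const_mul _).intervalIntegrable u v), intervalIntegral.integral_const_mul,
    intervalIntegral.integral_const_mul] at hftc
  linear_combination I * hftc + (t * (∫ ξ in u..v, cexp (-I * t * ξ) / ((a : ℂ) - I * ξ))
    - ∫ ξ in u..v, cexp (-I * t * ξ) / ((a : ℂ) - I * ξ) ^ 2) * I_sq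

lemma tendsto_cexp_div_cocompact (a t : ℝ) :
    Tendsto (fun ξ : ℝ => cexp (-I * t * ξ) / ((a : ℂ) - I * ξ)) (cocompact ℝ) (𝓝 0) := by
  rw [tendsto_zero_iff_norm_tendsto_zero]
  simp_rw [norm_div, norm_cexp_neg_I_mul_mul, one_div]
  refine tendsto_inv_atTop_zero.comp
    (tendsto_atTop_mono (fun ξ => ?_) tendsto_norm_cocompact_atTop)
  simpa using abs_im_le_norm ((a : ℂ) - I * ξ)

/-- `lim_{R→∞} ∫_{−R}^{R} e^{−itξ}/(a − iξ) dξ = 2π e^{−at}` for `a, t > 0`. -/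
theorem residue_type_integral_limit (a t : ℝ) (ha : 0 < a) (ht : 0 < t) :
    Tendsto
      (fun R : ℝ =>
        ∫ ξ in Set.Icc (-R) R,
          Complex.exp (-Complex.I * t * ξ) / ((a : ℂ) - Complex.I * ξ))
      atTop (𝓝 ((2 * π * Real.exp (-a * t) : ℝ) : ℂ)) := by
  have hmain := intervalIntegral_tendsto_integral (integrable_cexp_div_sq ha.ne' t)
    tendsto_neg_atTop_atBot tendsto_id
  rw [integral_cexp_div_sq ha ht] at hmain
  have hboundary := ((tendsto_cexp_div_cocompact a t).mono_left atTop_le_cocompact).sub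
    (((tendsto_cexp_div_cocompact a t).mono_left atBot_le_cocompact).comp tendsto_neg_atTop_atBot)
  have ht' : (t : ℂ) ≠ 0 := ofReal_ne_zero.mpr ht.ne'
  have hvalue : ((2 * π * rexp (-a * t) : ℝ) : ℂ)
      = (2 * π * t * cexp (-(a * t)) + I * (0 - 0)) / t := by
    rw [sub_self, mul_zero, add_zero]
    push_cast
    field_simp
  rw [hvalue]
  refine ((hmain.add (hboundary.const_mul I)).div_const _).congr' ?_
  filter_upwards [eventually_ge_atTop 0] with R hR
  rw [integral_Icc_eq_integral_Ioc, ← intervalIntegral.integral_of_le (by linarith)]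
  exact (eq_div_of_mul_eq ht' ((mul_comm _ _).trans
    (ofReal_mul_intervalIntegral_cexp_div ha.ne' t (-R) R))).symm
end

section
/- Let μ be the probability measure on ℝ with density x ↦ (1/√(2π)) x^{−3/2} e^{−1/(2x)} on (0,∞) and density 0 on (−∞, 0]. Then the characteristic function of μ satisfies ∫_ℝ e^{iξx} μ(dx) = exp(−|ξ|^{1/2} (1 − i·sgn(ξ))) for all ξ ∈ ℝ; that is, μ is the one-sided stable distribution of exponent 1/2. -/
/-!
Substituting `x = 1 / (2 u²)` turns the Laplace transform `∫ e^{-s x} μ(dx)` into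
`(2 / √π) ∫₀^∞ exp (-u² - c² / u²) du` with `c = √(s / 2)`. This is Glasser's integral
`(√π / 2) e^{-2c}`: the substitution `u ↦ c / u` shows that the weight `c / u²` may be added to
the integrand, after which `t = u - c / u` turns it into the Gaussian integral. Hence
`∫ e^{-z x} μ(dx) = exp (-√(2 z))` for real `z > 0`. Both sides are holomorphic on `Re z > 0` and
continuous on `Re z ≥ 0`, so they agree on the closed half-plane, and at `z = -iξ` the principal
square root gives `√(2 · (-iξ)) = |ξ|^{1/2} (1 - i sgn ξ)`.
-/

open MeasureTheory Real Filter Topology Set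
open scoped Complex

section Substitution

variable {E : Type*} [NormedAddCommGroup E] [NormedSpace ℝ E] {c : ℝ}

lemma image_div_Ioi (hc : 0 < c) : (c / ·) '' Ioi (0 : ℝ) = Ioi 0 := by
  refine Subset.antisymm (image_subset_iff.2 fun u hu => div_pos hc hu) fun t ht => ?_
  exact ⟨c / t, div_pos hc ht, div_div_cancel₀ hc.ne'⟩

lemma integral_Ioi_comp_div (hc : 0 < c) (g : ℝ → E) :
    ∫ u in Ioi 0, (c / u ^ 2) • g (c / u) = ∫ u in Ioi 0, g u := by
  have hderiv : ∀ u ∈ Ioi (0 : ℝ), HasDerivWithinAt (c / ·) (-(c / u ^ 2)) (Ioi 0) u :=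
    fun u hu => by
      simpa [div_eq_mul_inv] using ((hasDerivAt_inv (ne_of_gt hu)).const_mul c).hasDerivWithinAt
  have hinj : InjOn (c / ·) (Ioi (0 : ℝ)) := fun u _ v _ h => inv_injective <| by
    simpa [div_eq_mul_inv, hc.ne'] using h
  have := integral_image_eq_integral_abs_deriv_smul measurableSet_Ioi hderiv hinj g
  rw [image_div_Ioi hc] at this
  rw [this]
  refine setIntegral_congr_fun measurableSet_Ioi fun u hu => ?_
  rw [abs_neg, abs_of_pos (div_pos hc (pow_pos hu 2))]

lemma image_sub_div_Ioi (hc : 0 < c) : (fun u => u - c / u) '' Ioi (0 : ℝ) = univ := by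
  refine eq_univ_of_forall fun t => ?_
  -- the positive root of `u ^ 2 - t * u - c = 0`
  set s := √(t ^ 2 + 4 * c)
  have hs : s ^ 2 = t ^ 2 + 4 * c := sq_sqrt (by positivity)
  have hts : |t| < s := by
    rw [← sqrt_sq_eq_abs]; exact sqrt_lt_sqrt (sq_nonneg t) (by linarith)
  have hu : 0 < (t + s) / 2 := by linarith [neg_abs_le t]
  refine ⟨(t + s) / 2, hu, ?_⟩
  have hroot : c / ((t + s) / 2) = (t + s) / 2 - t := by
    rw [div_eq_iff hu.ne']
    linear_combination -hs / 4
  simp only [hroot]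
  ring

lemma hasDerivAt_sub_div {u : ℝ} (hu : u ≠ 0) :
    HasDerivAt (fun u => u - c / u) (1 + c / u ^ 2) u := by
  simp only [div_eq_mul_inv]
  exact ((hasDerivAt_id' u).fun_sub ((hasDerivAt_inv hu).const_mul c)).congr_deriv (by ring)

lemma strictMonoOn_sub_div (hc : 0 < c) : StrictMonoOn (fun u => u - c / u) (Ioi 0) :=
  fun _ hu _ _ huv => sub_lt_sub huv (div_lt_div_of_pos_left hc hu huv)

lemma integral_Ioi_comp_sub_div (hc : 0 < c) (g : ℝ → E) :
    ∫ u in Ioi 0, (1 + c / u ^ 2) • g (u - c / u) = ∫ t, g t := by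
  have := integral_image_eq_integral_abs_deriv_smul measurableSet_Ioi
    (fun u hu => (hasDerivAt_sub_div (ne_of_gt hu)).hasDerivWithinAt)
    (strictMonoOn_sub_div hc).injOn g
  rw [image_sub_div_Ioi hc, setIntegral_univ] at this
  rw [this]
  refine setIntegral_congr_fun measurableSet_Ioi fun u hu => ?_
  rw [abs_of_pos (by have := hu.out; positivity)]

lemma integrableOn_Ioi_comp_sub_div_iff (hc : 0 < c) (g : ℝ → E) :
    IntegrableOn (fun u => (1 + c / u ^ 2) • g (u - c / u)) (Ioi 0) ↔ Integrable g := by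
  have := integrableOn_image_iff_integrableOn_abs_deriv_smul measurableSet_Ioi
    (fun u hu => (hasDerivAt_sub_div (ne_of_gt hu)).hasDerivWithinAt)
    (strictMonoOn_sub_div hc).injOn g
  rw [image_sub_div_Ioi hc, integrableOn_univ] at this
  rw [this]
  refine integrableOn_congr_fun (fun u hu => ?_) measurableSet_Ioi
  rw [abs_of_pos (by have := hu.out; positivity)]

lemma image_inv_two_mul_sq_Ioi : (fun u : ℝ => (2 * u ^ 2)⁻¹) '' Ioi 0 = Ioi 0 := by
  refine Subset.antisymm (image_subset_iff.2 fun u hu => ?_) fun t ht => ?_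
  · show 0 < (2 * u ^ 2)⁻¹
    have : 0 < u := hu
    positivity
  have ht : 0 < t := ht
  refine ⟨(√(2 * t))⁻¹, inv_pos.2 (sqrt_pos.2 (by linarith)), ?_⟩
  simp only [inv_pow, sq_sqrt (by positivity : (0 : ℝ) ≤ 2 * t)]
  field_simp

lemma hasDerivAt_inv_two_mul_sq {u : ℝ} (hu : u ≠ 0) :
    HasDerivAt (fun u : ℝ => (2 * u ^ 2)⁻¹) (-(u ^ 3)⁻¹) u := by
  refine (((hasDerivAt_pow 2 u).const_mul 2).fun_inv (by positivity)).congr_deriv ?_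
  field_simp
  norm_num

lemma strictAntiOn_inv_two_mul_sq : StrictAntiOn (fun u : ℝ => (2 * u ^ 2)⁻¹) (Ioi 0) :=
  fun u hu v _ huv => by
    have : 0 < u := hu
    simp only
    gcongr

lemma integral_Ioi_comp_inv_two_mul_sq (g : ℝ → E) :
    ∫ u in Ioi (0 : ℝ), (u ^ 3)⁻¹ • g (2 * u ^ 2)⁻¹ = ∫ x in Ioi 0, g x := by
  have := integral_image_eq_integral_abs_deriv_smul measurableSet_Ioi
    (fun u hu => (hasDerivAt_inv_two_mul_sq (ne_of_gt hu)).hasDerivWithinAt)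
    strictAntiOn_inv_two_mul_sq.injOn g
  rw [image_inv_two_mul_sq_Ioi] at this
  rw [this]
  refine setIntegral_congr_fun measurableSet_Ioi fun u hu => ?_
  rw [abs_neg, abs_of_pos (by have := hu.out; positivity)]

lemma integrableOn_Ioi_comp_inv_two_mul_sq_iff (g : ℝ → E) :
    IntegrableOn (fun u : ℝ => (u ^ 3)⁻¹ • g (2 * u ^ 2)⁻¹) (Ioi 0) ↔ IntegrableOn g (Ioi 0) := by
  have := integrableOn_image_iff_integrableOn_abs_deriv_smul measurableSet_Ioi
    (fun u hu => (hasDerivAt_inv_two_mul_sq (ne_of_gt hu)).hasDerivWithinAt)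
    strictAntiOn_inv_two_mul_sq.injOn g
  rw [image_inv_two_mul_sq_Ioi] at this
  rw [this]
  refine integrableOn_congr_fun (fun u hu => ?_) measurableSet_Ioi
  rw [abs_neg, abs_of_pos (by have := hu.out; positivity)]

end Substitution

lemma integrableOn_exp_neg_sq_sub_div_sq (c : ℝ) :
    IntegrableOn (fun u : ℝ => rexp (-u ^ 2 - c ^ 2 / u ^ 2)) (Ioi 0) := by
  refine (integrable_exp_neg_mul_sq one_pos).integrableOn.mono'
    (by fun_prop : Measurable _).aestronglyMeasurable (ae_of_all _ fun u => ?_)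
  rw [norm_of_nonneg (exp_pos _).le, neg_one_mul]
  gcongr
  linarith [div_nonneg (sq_nonneg c) (sq_nonneg u)]

theorem integral_exp_neg_sq_sub_div_sq {c : ℝ} (hc : 0 < c) :
    ∫ u in Ioi 0, rexp (-u ^ 2 - c ^ 2 / u ^ 2) = √π / 2 * rexp (-(2 * c)) := by
  set F := fun u : ℝ => rexp (-u ^ 2 - c ^ 2 / u ^ 2)
  have hF : IntegrableOn F (Ioi 0) := integrableOn_exp_neg_sq_sub_div_sq c
  have hF_inv : ∀ u ∈ Ioi (0 : ℝ), F (c / u) = F u := fun u hu => by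
    have : u ≠ 0 := ne_of_gt hu
    simp only [F]
    congr 1
    field_simp
    ring
  -- completing the square: `u ^ 2 + c ^ 2 / u ^ 2 = (u - c / u) ^ 2 + 2 * c`
  have hsq : ∀ u ∈ Ioi (0 : ℝ), (1 + c / u ^ 2) • rexp (-(u - c / u) ^ 2) =
      rexp (2 * c) * ((1 + c / u ^ 2) * F u) := fun u hu => by
    have : u ≠ 0 := ne_of_gt hu
    rw [smul_eq_mul, mul_left_comm, ← Real.exp_add]
    congr 2
    field_simp
    ring
  have hsum : IntegrableOn (fun u => (1 + c / u ^ 2) * F u) (Ioi 0) := by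
    have h := (integrableOn_Ioi_comp_sub_div_iff hc fun t => rexp (-t ^ 2)).2
      (by simpa using integrable_exp_neg_mul_sq one_pos)
    rw [integrableOn_congr_fun hsq measurableSet_Ioi] at h
    exact (integrable_const_mul_iff (exp_pos _).ne'.isUnit _).1 h
  have hB : IntegrableOn (fun u => c / u ^ 2 * F u) (Ioi 0) :=
    (hsum.sub hF).congr_fun (fun u _ => by simp only [Pi.sub_apply]; ring) measurableSet_Ioi
  have hB_eq : ∫ u in Ioi 0, c / u ^ 2 * F u = ∫ u in Ioi 0, F u := by
    rw [← integral_Ioi_comp_div hc F]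
    exact setIntegral_congr_fun measurableSet_Ioi fun u hu => by rw [smul_eq_mul, hF_inv u hu]
  have hsum_eq : ∫ u in Ioi 0, (1 + c / u ^ 2) * F u = rexp (-(2 * c)) * √π := by
    have h := integral_Ioi_comp_sub_div hc fun t => rexp (-t ^ 2)
    rw [setIntegral_congr_fun measurableSet_Ioi hsq, integral_const_mul] at h
    rw [show ∫ t, rexp (-t ^ 2) = √π by simpa using integral_gaussian 1] at h
    rw [← h, ← mul_assoc, ← Real.exp_add, neg_add_cancel, Real.exp_zero, one_mul]
  calc ∫ u in Ioi 0, F u = ((∫ u in Ioi 0, F u) + ∫ u in Ioi 0, c / u ^ 2 * F u) / 2 := by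
        rw [hB_eq]; ring
    _ = (∫ u in Ioi 0, (1 + c / u ^ 2) * F u) / 2 := by
        rw [← integral_add hF hB]
        congr 1
        exact setIntegral_congr_fun measurableSet_Ioi fun u _ => by ring
    _ = √π / 2 * rexp (-(2 * c)) := by rw [hsum_eq]; ring

section LaplaceTransform

variable {f : ℝ → ℂ}

lemma norm_cexp_neg_mul_ofReal (z : ℂ) (x : ℝ) : ‖cexp (-(z * x))‖ = rexp (-(z.re * x)) := by
  simp [Complex.norm_exp]

lemma norm_mul_cexp_neg_mul_ofReal_le (a : ℂ) {z : ℂ} (hz : 0 ≤ z.re) {x : ℝ} (hx : 0 ≤ x) :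
    ‖a * cexp (-(z * x))‖ ≤ ‖a‖ := by
  rw [norm_mul, norm_cexp_neg_mul_ofReal]
  exact mul_le_of_le_one_right (norm_nonneg _) (exp_le_one_iff.2 (neg_nonpos.2 (mul_nonneg hz hx)))

lemma mul_exp_neg_mul_le_inv {δ : ℝ} (hδ : 0 < δ) (x : ℝ) : x * rexp (-(δ * x)) ≤ δ⁻¹ := by
  have h := (mul_exp_neg_le_exp_neg_one (δ * x)).trans (exp_le_one_iff.2 (by norm_num))
  rwa [mul_assoc, ← le_inv_mul_iff₀ hδ, mul_one] at h

lemma continuousOn_integral_mul_cexp_neg (hf : IntegrableOn f (Ioi 0)) :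
    ContinuousOn (fun z : ℂ => ∫ x in Ioi 0, f x * cexp (-(z * x))) {z | 0 ≤ z.re} :=
  continuousOn_of_dominated
    (fun _ _ => hf.aestronglyMeasurable.mul (by fun_prop : Continuous _).aestronglyMeasurable)
    (fun _ hz => ae_restrict_of_forall_mem measurableSet_Ioi fun _ hx =>
      norm_mul_cexp_neg_mul_ofReal_le _ hz (le_of_lt hx))
    hf.norm (ae_of_all _ fun _ => by fun_prop)

lemma differentiableOn_integral_mul_cexp_neg (hf : IntegrableOn f (Ioi 0)) :
    DifferentiableOn ℂ (fun z : ℂ => ∫ x in Ioi 0, f x * cexp (-(z * x))) {z | 0 < z.re} := by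
  intro z₀ hz₀
  have hδ : 0 < z₀.re / 2 := half_pos hz₀
  have hbound : ∀ᵐ x ∂volume.restrict (Ioi 0), ∀ z ∈ Metric.ball z₀ (z₀.re / 2),
      ‖f x * (-x * cexp (-(z * x)))‖ ≤ (z₀.re / 2)⁻¹ * ‖f x‖ := by
    filter_upwards [ae_restrict_mem measurableSet_Ioi] with x hx z hz
    have hx : 0 ≤ x := le_of_lt hx
    have hre : z₀.re / 2 ≤ z.re := by
      have := (Complex.abs_re_le_norm (z - z₀)).trans (mem_ball_iff_norm.1 hz).le
      rw [Complex.sub_re] at this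
      linarith [neg_abs_le (z.re - z₀.re)]
    rw [norm_mul, norm_mul, norm_cexp_neg_mul_ofReal, norm_neg, Complex.norm_real,
      norm_of_nonneg hx, mul_comm _ ‖f x‖]
    refine mul_le_mul_of_nonneg_left ?_ (norm_nonneg _)
    calc x * rexp (-(z.re * x)) ≤ x * rexp (-(z₀.re / 2 * x)) := by
          gcongr
      _ ≤ (z₀.re / 2)⁻¹ := mul_exp_neg_mul_le_inv hδ x
  have hderiv : ∀ᵐ x ∂volume.restrict (Ioi 0), ∀ z ∈ Metric.ball z₀ (z₀.re / 2),
      HasDerivAt (fun w => f x * cexp (-(w * x))) (f x * (-x * cexp (-(z * x)))) z :=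
    ae_of_all _ fun x z _ =>
      ((((hasDerivAt_id' z).mul_const (x : ℂ)).neg.cexp).const_mul (f x)).congr_deriv
        (by simp only [Pi.neg_apply]; ring)
  have hint : IntegrableOn (fun x => f x * cexp (-(z₀ * x))) (Ioi 0) :=
    hf.norm.mono' (hf.aestronglyMeasurable.mul (by fun_prop : Continuous _).aestronglyMeasurable)
      (ae_restrict_of_forall_mem measurableSet_Ioi fun _ hx =>
        norm_mul_cexp_neg_mul_ofReal_le _ hz₀.out.le (le_of_lt hx))
  exact (hasDerivAt_integral_of_dominated_loc_of_deriv_le (Metric.ball_mem_nhds z₀ hδ)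
    (F := fun z x => f x * cexp (-(z * x)))
    (Eventually.of_forall fun z => hf.aestronglyMeasurable.mul
      (by fun_prop : Continuous _).aestronglyMeasurable)
    hint (hf.aestronglyMeasurable.mul (by fun_prop : Continuous _).aestronglyMeasurable)
    hbound (hf.norm.const_mul _) hderiv).2.differentiableAt.differentiableWithinAt

end LaplaceTransform

lemma eqOn_re_nonneg_of_forall_ofReal_eq {E : Type*} [NormedAddCommGroup E] [NormedSpace ℂ E]
    [CompleteSpace E] {g h : ℂ → E}
    (hg : DifferentiableOn ℂ g {z | 0 < z.re}) (hh : DifferentiableOn ℂ h {z | 0 < z.re})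
    (hg' : ContinuousOn g {z | 0 ≤ z.re}) (hh' : ContinuousOn h {z | 0 ≤ z.re})
    (heq : ∀ s : ℝ, 0 < s → g s = h s) : EqOn g h {z | 0 ≤ z.re} := by
  have hopen : IsOpen {z : ℂ | 0 < z.re} := isOpen_lt continuous_const Complex.continuous_re
  have hlim : Tendsto ((↑) : ℝ → ℂ) (𝓝[>] (1 : ℝ)) (𝓝[≠] 1) := by
    refine tendsto_nhdsWithin_iff.2 ⟨?_, eventually_nhdsWithin_of_forall fun s hs => ?_⟩
    · simpa using (Complex.continuous_ofReal.tendsto 1).mono_left nhdsWithin_le_nhds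
    · simpa using hs.out.ne'
  have hpos : ∀ᶠ s : ℝ in 𝓝[>] 1, g s = h s :=
    eventually_nhdsWithin_of_forall fun s hs => heq s (one_pos.trans hs)
  have hfreq : ∃ᶠ z in 𝓝[≠] (1 : ℂ), g z = h z := hlim.frequently hpos.frequently
  exact ((hg.analyticOnNhd hopen).eqOn_of_preconnected_of_frequently_eq (hh.analyticOnNhd hopen)
    (convex_halfSpace_re_gt 0).isPreconnected (by simp) hfreq).of_subset_closure hg' hh'
    (fun z (hz : 0 < z.re) => hz.le) (by rw [Complex.closure_setOfPred_lt_re])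

lemma Complex.cpow_two_inv_eq_of_sq_eq {w z : ℂ} (hw : 0 < w.re ∨ w = 0) (h : w ^ 2 = z) :
    z ^ (2⁻¹ : ℂ) = w := by
  subst h
  rcases hw with hw | rfl
  · exact Complex.sq_cpow_two_inv hw
  · simp

lemma neg_I_mul_cpow_two_inv (ξ : ℝ) :
    (-(Complex.I * ξ)) ^ (2⁻¹ : ℂ) = √(|ξ| / 2) * (1 - Complex.I * Real.sign ξ) := by
  refine Complex.cpow_two_inv_eq_of_sq_eq ?_ ?_
  · rcases eq_or_ne ξ 0 with rfl | hξ
    · simp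
    · left
      simpa using sqrt_pos.2 (half_pos (abs_pos.2 hξ))
  · have hsq : (√(|ξ| / 2) : ℂ) ^ 2 = |ξ| / 2 := by
      rw [← Complex.ofReal_pow, sq_sqrt (by positivity)]; push_cast; ring
    rcases lt_trichotomy ξ 0 with hξ | rfl | hξ
    · rw [sign_of_neg hξ, abs_of_neg hξ] at *
      push_cast at *
      linear_combination (1 + Complex.I) ^ 2 * hsq - ξ / 2 * Complex.I_sq
    · simp
    · rw [sign_of_pos hξ, abs_of_pos hξ] at *
      push_cast at *
      linear_combination (1 - Complex.I) ^ 2 * hsq + ξ / 2 * Complex.I_sq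

noncomputable def levyDensity (x : ℝ) : ℝ :=
  if 0 < x then 1 / √(2 * π) * x ^ (-(3 : ℝ) / 2) * rexp (-1 / (2 * x)) else 0

lemma levyDensity_nonneg (x : ℝ) : 0 ≤ levyDensity x := by
  unfold levyDensity
  split_ifs <;> positivity

lemma levyDensity_of_nonpos {x : ℝ} (hx : x ≤ 0) : levyDensity x = 0 :=
  if_neg hx.not_gt

lemma measurable_levyDensity : Measurable levyDensity :=
  Measurable.ite measurableSet_Ioi (by fun_prop) measurable_const

lemma inv_pow_three_mul_levyDensity_inv_two_mul_sq {u : ℝ} (hu : 0 < u) :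
    (u ^ 3)⁻¹ * levyDensity (2 * u ^ 2)⁻¹ = 2 / √π * rexp (-u ^ 2) := by
  have h2u : 0 ≤ 2 * u ^ 2 := by positivity
  have hpow : ((2 * u ^ 2)⁻¹ : ℝ) ^ (-(3 : ℝ) / 2) = 2 * √2 * u ^ 3 := by
    rw [inv_rpow h2u, ← rpow_neg h2u, neg_div, neg_neg, mul_rpow zero_le_two (sq_nonneg u),
      show (3 : ℝ) / 2 = 1 + 1 / 2 by norm_num, rpow_add two_pos, rpow_one, ← sqrt_eq_rpow,
      ← rpow_natCast, ← rpow_mul hu.le]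
    norm_num
  rw [levyDensity, if_pos (by positivity), hpow, sqrt_mul zero_le_two,
    show -1 / (2 * (2 * u ^ 2)⁻¹) = -u ^ 2 by field_simp]
  field_simp

lemma integrableOn_levyDensity : IntegrableOn levyDensity (Ioi 0) := by
  rw [← integrableOn_Ioi_comp_inv_two_mul_sq_iff]
  refine (((integrable_exp_neg_mul_sq one_pos).const_mul (2 / √π)).integrableOn).congr_fun
    (fun u hu => ?_) measurableSet_Ioi
  rw [smul_eq_mul, inv_pow_three_mul_levyDensity_inv_two_mul_sq hu]
  simp only [neg_one_mul]

theorem integral_levyDensity_mul_exp_neg {s : ℝ} (hs : 0 < s) :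
    ∫ x in Ioi 0, levyDensity x * rexp (-(s * x)) = rexp (-√(2 * s)) := by
  have hsubst : ∀ u ∈ Ioi (0 : ℝ),
      (u ^ 3)⁻¹ • (levyDensity (2 * u ^ 2)⁻¹ * rexp (-(s * (2 * u ^ 2)⁻¹))) =
        2 / √π * rexp (-u ^ 2 - √(s / 2) ^ 2 / u ^ 2) := fun u hu => by
    have : u ≠ 0 := ne_of_gt hu
    rw [smul_eq_mul, ← mul_assoc, inv_pow_three_mul_levyDensity_inv_two_mul_sq hu, mul_assoc,
      ← Real.exp_add, sq_sqrt (by positivity)]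
    congr 3
    field_simp
  have hsqrt : 2 * √(s / 2) = √(2 * s) := by
    rw [show 2 * s = 2 ^ 2 * (s / 2) by ring, sqrt_mul (by positivity), sqrt_sq zero_le_two]
  rw [← integral_Ioi_comp_inv_two_mul_sq, setIntegral_congr_fun measurableSet_Ioi hsubst,
    integral_const_mul, integral_exp_neg_sq_sub_div_sq (sqrt_pos.2 (half_pos hs)), hsqrt]
  field_simp

theorem integral_levyDensity_mul_cexp_neg {z : ℂ} (hz : 0 ≤ z.re) :
    ∫ x in Ioi 0, (levyDensity x : ℂ) * cexp (-(z * x)) = cexp (-(√2 * z ^ (2⁻¹ : ℂ))) := by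
  have hf : IntegrableOn (fun x => (levyDensity x : ℂ)) (Ioi 0) := integrableOn_levyDensity.ofReal
  refine eqOn_re_nonneg_of_forall_ofReal_eq (h := fun z => cexp (-(√2 * z ^ (2⁻¹ : ℂ))))
    (differentiableOn_integral_mul_cexp_neg hf)
    (fun w hw => ?_) (continuousOn_integral_mul_cexp_neg hf)
    (fun w hw => ?_) (fun s hs => ?_) hz
  · have hroot := (Complex.hasStrictDerivAt_cpow_const (c := 2⁻¹) (Or.inl hw)).hasDerivAt
    exact (hroot.differentiableAt.const_mul _).neg.cexp.differentiableWithinAt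
  · exact ((Complex.continuousAt_cpow_const_of_re_pos (Or.inl hw) (by norm_num)).const_mul _).neg
      |>.cexp.continuousWithinAt
  · have hsqrt : (s : ℂ) ^ (2⁻¹ : ℂ) = √s :=
      Complex.cpow_two_inv_eq_of_sq_eq (Or.inl (by simpa using hs)) (by
        rw [← Complex.ofReal_pow, sq_sqrt hs.le])
    rw [hsqrt, ← Complex.ofReal_mul, ← sqrt_mul zero_le_two, ← Complex.ofReal_neg,
      ← Complex.ofReal_exp, ← integral_levyDensity_mul_exp_neg hs, ← integral_complex_ofReal]
    refine setIntegral_congr_fun measurableSet_Ioi fun x _ => ?_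
    push_cast
    ring

/-- the measure with density `(1/√(2π)) x^{−3/2} e^{−1/(2x)}` on `(0,∞)` has
characteristic function `exp(−|ξ|^{1/2}(1 − i·sgn ξ))`, i.e. it is the one-sided stable
distribution of exponent `1/2`. -/
theorem levy_density_charFn
    (μ : Measure ℝ)
    (hμ : μ = volume.withDensity
      (fun x : ℝ => ENNReal.ofReal
        (if 0 < x then (1 / Real.sqrt (2 * π)) * x ^ (-(3 : ℝ) / 2) * Real.exp (-1 / (2 * x))
         else 0))) :
    ∀ ξ : ℝ,
      ∫ x, Complex.exp (Complex.I * ξ * x) ∂μ =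
        Complex.exp (-(|ξ| ^ ((1 : ℝ) / 2) : ℝ) * (1 - Complex.I * Real.sign ξ)) := by
  intro ξ
  change μ = volume.withDensity fun x => ENNReal.ofReal (levyDensity x) at hμ
  have hvanish : ∀ x ∉ Ioi (0 : ℝ), (levyDensity x : ℂ) * cexp (Complex.I * ξ * x) = 0 :=
    fun x hx => by rw [levyDensity_of_nonpos (not_lt.1 hx), Complex.ofReal_zero, zero_mul]
  calc ∫ x, cexp (Complex.I * ξ * x) ∂μ
      = ∫ x, (levyDensity x : ℂ) * cexp (Complex.I * ξ * x) := by
        rw [hμ, integral_withDensity_eq_integral_toReal_smul measurable_levyDensity.ennreal_ofReal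
          (ae_of_all _ fun _ => ENNReal.ofReal_lt_top)]
        simp only [ENNReal.toReal_ofReal (levyDensity_nonneg _), Complex.real_smul]
    _ = ∫ x in Ioi 0, (levyDensity x : ℂ) * cexp (-(-(Complex.I * ξ) * x)) := by
        rw [setIntegral_eq_integral_of_forall_compl_eq_zero (by simpa using hvanish)]
        simp only [neg_mul, neg_neg]
    _ = cexp (-(√|ξ| * (1 - Complex.I * Real.sign ξ))) := by
        rw [integral_levyDensity_mul_cexp_neg (by simp), neg_I_mul_cpow_two_inv, ← mul_assoc,
          ← Complex.ofReal_mul, ← sqrt_mul zero_le_two, mul_div_cancel₀ _ two_ne_zero]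
    _ = _ := by rw [sqrt_eq_rpow, neg_mul]
end
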